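/- arXiv:1106.0077 — 6 statements merged into one kernel-verified Lean document; each statement's English description precedes it below -/
import Mathlib

section
/- Suppose C ⊆ 2^X is both d-maximum and d-maximal, and for each (d+1)-element A ⊆ X let A* denote the forbidden label of C on A. Then for any c ⊆ X: c ∈ C if and only if for every (d+1)-element A ⊆ X, c ∩ A ≠ A*. -/
open Set

variable {X : Type*}

/-- The trace of a set system `C` on a set `A`. -/
def Tr (C : Set (Set X)) (A : Set X) : Set (Set X) := (fun c => c ∩ A) '' C

/-- `C` shatters the set `A`. -/
def Shat (C : Set (Set X)) (A : Set X) : Prop := ∀ t ⊆ A, ∃ c ∈ C, c ∩ A = t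

/-- The VC dimension of `C` is at most `d`. -/
def VCLe (C : Set (Set X)) (d : ℕ) : Prop := ∀ A : Finset X, Shat C ↑A → A.card ≤ d

/-- The VC dimension of `C` is exactly `d`. -/
def VCEq (C : Set (Set X)) (d : ℕ) : Prop :=
  VCLe C d ∧ ∃ A : Finset X, A.card = d ∧ Shat C ↑A

/-- The Sauer–Shelah bound `Φ_d(n) = Σ_{i=0}^d C(n,i)`. -/
def Phi (d n : ℕ) : ℕ := ∑ i ∈ Finset.range (d + 1), n.choose i

/-- `C` is a `d`-maximum class. -/
def IsMaximum (C : Set (Set X)) (d : ℕ) : Prop :=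
  VCEq C d ∧ ∀ A : Finset X, (Tr C ↑A).ncard = Phi d A.card

/-- `C` is a `d`-maximal class. -/
def IsMaximal (C : Set (Set X)) (d : ℕ) : Prop :=
  VCEq C d ∧ ∀ c ∉ C, VCEq (insert c C) (d + 1)

/-- Membership in a `d`-maximum, `d`-maximal class is characterized by avoiding
all forbidden labels. -/
theorem mem_iff_avoids_forbidden (C : Set (Set X)) (d : ℕ)
    (h₁ : IsMaximum C d) (h₂ : IsMaximal C d) (c : Set X) :
    c ∈ C ↔ ∀ A : Finset X, A.card = d + 1 →
      ∀ t ⊆ (↑A : Set X), t ∉ Tr C ↑A → c ∩ ↑A ≠ t := by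
  constructor
  · intro hc A _ t _ ht heq
    exact ht ⟨c, hc, heq⟩
  · intro h
    by_contra hc
    obtain ⟨_, A, hAcard, hAshat⟩ := h₂.2 c hc
    have hshat : Shat C ↑A := by
      intro t htA
      obtain ⟨c', hc', hc'A⟩ := hAshat t htA
      rcases hc' with heq | hc'
      · rw [heq] at hc'A
        by_cases hmem : c ∩ ↑A ∈ Tr C ↑A
        · obtain ⟨c'', hc'', hc''A⟩ := hmem
          exact ⟨c'', hc'', hc''A.trans hc'A⟩
        · exact absurd rfl (h A hAcard (c ∩ ↑A) Set.inter_subset_right hmem)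
      · exact ⟨c', hc', hc'A⟩
    have := h₁.1.1 A hshat
    omega
end

section
/- Let C ⊆ 2^X be d-maximum and d-maximal, and suppose p ⊆ X is such that every finite restriction of p avoids all forbidden labels: i.e., for each finite subset B ⊆ X, p ∩ B is (d+1)-consistent with C in the sense that for every (d+1)-element A ⊆ B, p ∩ A is the trace of some member of C on A. Then p ∈ C. Consequently, if a set of signed constraints indexed by X is (d+1)-satisfiable by members of C on every (d+1)-element subset, it is globally satisfiable by a member of C. (Helly-type property / (d+1)-NFCP for maximum-maximal classes.) -/
open Set

variable {X : Type*}

/-- Helly-type property: a set avoiding all forbidden labels on every finite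
subset belongs to a `d`-maximum, `d`-maximal class. -/
theorem maximum_maximal_nfcp (C : Set (Set X)) (d : ℕ)
    (h₁ : IsMaximum C d) (h₂ : IsMaximal C d) (p : Set X)
    (hp : ∀ B : Finset X, ∀ A ⊆ B, A.card = d + 1 → p ∩ ↑A ∈ Tr C ↑A) :
    p ∈ C := by
  by_contra hpC
  obtain ⟨A, hAcard, hAshat⟩ := (h₂.2 p hpC).2
  -- C does not shatter A since VCLe C d
  have hCle : VCLe C d := h₂.1.1
  have hnot : ¬ Shat C ↑A := fun h => by
    have := hCle A h; omega
  rw [Shat] at hnot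
  push_neg at hnot
  obtain ⟨t, htA, ht⟩ := hnot
  obtain ⟨c, hc, hct⟩ := hAshat t htA
  rcases hc with rfl | hc
  · -- c = p, so t = p ∩ A, contradiction with hp
    obtain ⟨c', hc', hc't⟩ := hp A A le_rfl hAcard
    exact ht c' hc' (hc't.trans hct)
  · exact ht c hc hct
end

section
/- For any n ∈ ℕ and A ⊆ X, the family [X]^{≤n} Δ A = {B Δ A : B ⊆ X, |B| ≤ n} equals {c ⊆ X : |c Δ A| ≤ n}, and it is stable in the order-property sense: there is no sequence a_1,…,a_N ∈ X and c_1,…,c_N in the family with a_i ∈ c_j ⟺ i < j, for N > 2n + 2. -/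
open Set
open scoped symmDiff

variable {X : Type*}

/-- `C` has the order property of length `N`. -/
def HasOrderProp (C : Set (Set X)) (N : ℕ) : Prop :=
  ∃ a : Fin N → X, ∃ f : Fin N → Set X, (∀ i, f i ∈ C) ∧ ∀ i j, a i ∈ f j ↔ i < j

/-! If `a i ∈ c j ↔ i < j` for `i, j < N`, the `N - 1` distinct points `a 0, …, a (N - 2)` lie in
`c (N - 1) \ c 0`. In `[X]^{≤n} ∆ A` any two members differ in at most `2n` points, because
`c ∆ d ⊆ (c ∆ A) ∪ (d ∆ A)`; hence `N ≤ 2n + 1`. -/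

theorem injective_of_mem_iff_lt {ι : Type*} [LinearOrder ι] {a : ι → X} {f : ι → Set X}
    (h : ∀ i j, a i ∈ f j ↔ i < j) : Function.Injective a := by
  have hne : ∀ i j, i < j → a i ≠ a j := fun i j hij heq =>
    lt_irrefl j ((h j j).mp (heq ▸ (h i j).mpr hij))
  intro i j hij
  rcases lt_trichotomy i j with hlt | rfl | hgt
  · exact absurd hij (hne i j hlt)
  · rfl
  · exact absurd hij.symm (hne j i hgt)

theorem le_encard_sdiff_of_mem_iff_lt {N : ℕ} {a : Fin (N + 1) → X} {f : Fin (N + 1) → Set X}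
    (h : ∀ i j, a i ∈ f j ↔ i < j) : (N : ℕ∞) ≤ (f (Fin.last N) \ f 0).encard := by
  have hinj : Function.Injective (a ∘ Fin.castSucc) :=
    (injective_of_mem_iff_lt h).comp (Fin.castSucc_injective N)
  have hmaps : range (a ∘ Fin.castSucc) ⊆ f (Fin.last N) \ f 0 := by
    rintro _ ⟨i, rfl⟩
    exact ⟨(h _ _).mpr (Fin.castSucc_lt_last i), fun hi => Fin.not_lt_zero _ ((h _ _).mp hi)⟩
  calc (N : ℕ∞) = ENat.card (Fin N) := by simp
    _ ≤ (range (a ∘ Fin.castSucc)).encard := hinj.encard_range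
    _ ≤ _ := encard_le_encard hmaps

theorem HasOrderProp.exists_le_encard_symmDiff {C : Set (Set X)} {N : ℕ}
    (h : HasOrderProp C (N + 1)) : ∃ c ∈ C, ∃ d ∈ C, (N : ℕ∞) ≤ (c ∆ d).encard := by
  obtain ⟨a, f, hfC, hord⟩ := h
  exact ⟨_, hfC (Fin.last N), _, hfC 0,
    (le_encard_sdiff_of_mem_iff_lt hord).trans (encard_le_encard le_sup_left)⟩

theorem not_hasOrderProp_of_encard_symmDiff_le {C : Set (Set X)} {k N : ℕ}
    (hC : ∀ c ∈ C, ∀ d ∈ C, (c ∆ d).encard ≤ k) (hN : k + 1 < N) : ¬ HasOrderProp C N := by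
  obtain ⟨M, rfl⟩ : ∃ M, N = M + 1 := Nat.exists_eq_succ_of_ne_zero (by omega)
  intro h
  obtain ⟨c, hc, d, hd, hcd⟩ := h.exists_le_encard_symmDiff
  have : (M : ℕ∞) ≤ k := hcd.trans (hC c hc d hd)
  norm_cast at this
  omega

theorem encard_symmDiff_le_add (c d A : Set X) :
    (c ∆ d).encard ≤ (c ∆ A).encard + (d ∆ A).encard := by
  calc (c ∆ d).encard ≤ (c ∆ A ∪ A ∆ d).encard := encard_le_encard (symmDiff_triangle c A d)
    _ ≤ (c ∆ A).encard + (A ∆ d).encard := encard_union_le _ _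
    _ = (c ∆ A).encard + (d ∆ A).encard := by rw [symmDiff_comm A d]

theorem image_symmDiff_setOf (A : Set X) (p : Set X → Prop) :
    (fun B => B ∆ A) '' {B | p B} = {c | p (c ∆ A)} :=
  congrFun (image_eq_preimage_of_inverse (fun B => symmDiff_symmDiff_cancel_right A B)
    (fun c => symmDiff_symmDiff_cancel_right A c)) _

/-- `[X]^{≤n} Δ A` equals `{c : |c Δ A| ≤ n}` and is stable. -/
theorem smallSets_symmDiff_stable (n : ℕ) (A : Set X) :
    ((fun B => B ∆ A) '' {B : Set X | B.Finite ∧ B.ncard ≤ n} =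
      {c : Set X | (c ∆ A).Finite ∧ (c ∆ A).ncard ≤ n}) ∧
    ∀ N : ℕ, 2 * n + 2 < N →
      ¬ HasOrderProp ((fun B => B ∆ A) '' {B : Set X | B.Finite ∧ B.ncard ≤ n}) N := by
  have hfamily := image_symmDiff_setOf A (fun B => B.Finite ∧ B.ncard ≤ n)
  refine ⟨hfamily, fun N hN => ?_⟩
  refine not_hasOrderProp_of_encard_symmDiff_le (k := 2 * n) (fun c hc d hd => ?_) (by omega)
  rw [hfamily] at hc hd
  have hc' := encard_le_coe_iff_finite_ncard_le.mpr hc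
  have hd' := encard_le_coe_iff_finite_ncard_le.mpr hd
  calc (c ∆ d).encard ≤ (c ∆ A).encard + (d ∆ A).encard := encard_symmDiff_le_add c d A
    _ ≤ n + n := add_le_add hc' hd'
    _ = (2 * n : ℕ) := by push_cast; ring
end

section
/- Let C ⊆ 2^X be a family such that there exist n ∈ ℕ and A ⊆ X with C ⊆ {B Δ A : |B| ≤ n}. Then C is stable: C does not have the order property of any length N > 2n + 2. Conversely (finitary direction of the main theorem): if C is d-maximum on an infinite set X and there exist c_1, c_2 ∈ C with c_1 Δ c_2 infinite such that C contains witnesses making arbitrarily long order sequences, then C is unstable. -/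
open Set
open scoped symmDiff

variable {X : Type*}

/-!
If `c = B ∆ A` and `c' = B' ∆ A` with `|B|, |B'| ≤ n`, then `c' \ c ⊆ B ∪ B'` has at most `2n`
points, whereas the first and the last set of an order sequence of length `N` differ on the
`N - 1` points `a_0, …, a_{N-2}`.

Conversely, take `s₁, s₂ ∈ C` with `s₂ \ s₁` infinite and `A ⊆ s₂ \ s₁` with `N` points. The trace
`D` of `C` on `A` contains `∅` and `A`, has `Φ_d(|A|)` members and shatters exactly the subsets
of `A` with at most `d` points, so it is shattering-extremal: equality holds in Pajor's
inequality `|D| ≤ |sh D|`. Extremality survives translation by `∆ u` and passing to the members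
avoiding a point; hence the members inside a minimal nonempty member `c` form the extremal family
`{∅, c}`, which forces `c = {x}`. Translating by `{x}` and inducting on `|A|` yields a chain
`∅ = u₀ ⊂ u₁ ⊂ ⋯ ⊂ u_N = A` in `D` with `|u_j| = j`, i.e. an order sequence of length `N`.
-/

open Finset

lemma HasOrderProp.exists_finset_subset_diff {C : Set (Set X)} {N : ℕ}
    (h : HasOrderProp C (N + 1)) : ∃ c ∈ C, ∃ c' ∈ C, ∃ s : Finset X, #s = N ∧ ↑s ⊆ c' \ c := by
  classical
  obtain ⟨a, f, hfC, haf⟩ := h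
  have ha : Function.Injective a := fun i j hij ↦ by
    by_contra hne
    rcases lt_or_gt_of_ne hne with hij' | hij'
    · exact lt_irrefl j ((haf j j).1 (hij ▸ (haf i j).2 hij'))
    · exact lt_irrefl i ((haf i i).1 (hij ▸ (haf j i).2 hij'))
  refine ⟨f 0, hfC 0, f (Fin.last N), hfC _, univ.image (a ∘ Fin.castSucc), ?_, ?_⟩
  · rw [card_image_of_injective _ (ha.comp (Fin.castSucc_injective N)), card_univ,
      Fintype.card_fin]
  · intro x hx
    obtain ⟨i, -, rfl⟩ := mem_image.1 (mem_coe.1 hx)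
    exact ⟨(haf _ _).2 (Fin.castSucc_lt_last i), fun h ↦ Fin.not_lt_zero _ ((haf _ _).1 h)⟩

lemma not_hasOrderProp_of_subset_image_symmDiff {C : Set (Set X)} {n N : ℕ} {A : Set X}
    (hC : C ⊆ (fun B => B ∆ A) '' {B : Set X | B.Finite ∧ B.ncard ≤ n}) (hN : 2 * n + 2 < N) :
    ¬ HasOrderProp C N := by
  obtain ⟨M, rfl⟩ : ∃ M, N = M + 1 := ⟨N - 1, by omega⟩
  intro h
  obtain ⟨c, hc, c', hc', s, hs, hsc⟩ := h.exists_finset_subset_diff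
  obtain ⟨B, ⟨hB, hBn⟩, rfl⟩ := hC hc
  obtain ⟨B', ⟨hB', hB'n⟩, rfl⟩ := hC hc'
  have hsB : ↑s ⊆ B' ∪ B := fun x hx ↦ by
    have := hsc hx
    simp only [mem_sdiff, mem_symmDiff, mem_union] at this ⊢
    tauto
  have : M ≤ B'.ncard + B.ncard := calc
    M = (↑s : Set X).ncard := by rw [ncard_coe_finset, hs]
    _ ≤ (B' ∪ B).ncard := ncard_le_ncard hsB (hB'.union hB)
    _ ≤ B'.ncard + B.ncard := ncard_union_le _ _
  omega

namespace Finset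

variable {α : Type*} [DecidableEq α] {𝒜 : Finset (Finset α)} {s t : Finset α} {a : α}

def IsShatteringExtremal (𝒜 : Finset (Finset α)) : Prop := #𝒜.shatterer = #𝒜

lemma Shatters.notMem_of_forall_notMem (h : ∀ u ∈ 𝒜, a ∉ u) (hs : 𝒜.Shatters s) : a ∉ s :=
  fun ha ↦ by
    obtain ⟨u, hu, hsu⟩ := hs.exists_superset
    exact h u hu (hsu ha)

lemma Shatters.of_memberSubfamily (hs : (𝒜.memberSubfamily a).Shatters s) : 𝒜.Shatters s := by
  have has : a ∉ s := hs.notMem_of_forall_notMem fun u hu ↦ (mem_memberSubfamily.1 hu).2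
  intro t ht
  obtain ⟨u, hu, rfl⟩ := hs ht
  exact ⟨insert a u, (mem_memberSubfamily.1 hu).1, inter_insert_of_notMem has⟩

lemma Shatters.insert_of_memberSubfamily_of_nonMemberSubfamily
    (h₁ : (𝒜.memberSubfamily a).Shatters s) (h₀ : (𝒜.nonMemberSubfamily a).Shatters s) :
    𝒜.Shatters (insert a s) := by
  intro t ht
  by_cases hat : a ∈ t
  · obtain ⟨u, hu, hsu⟩ := h₁ (t := t.erase a) fun x hx ↦ by
      simpa [(mem_erase.1 hx).1] using ht (mem_of_mem_erase hx)
    refine ⟨insert a u, (mem_memberSubfamily.1 hu).1, ?_⟩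
    rw [← insert_inter_distrib, hsu, insert_erase hat]
  · obtain ⟨u, hu, hsu⟩ := h₀ ((subset_insert_iff_of_notMem hat).1 ht)
    rw [mem_nonMemberSubfamily] at hu
    exact ⟨u, hu.1, by rw [insert_inter_of_notMem hu.2, hsu]⟩

/-- The splitting step of Pajor's lemma: the union of the two shatterers lies in the part of
`𝒜.shatterer` avoiding `a`, and `insert a` maps their intersection into the part containing `a`. -/
lemma card_shatterer_memberSubfamily_add_card_shatterer_nonMemberSubfamily_le (a : α)
    (𝒜 : Finset (Finset α)) :
    #(𝒜.memberSubfamily a).shatterer + #(𝒜.nonMemberSubfamily a).shatterer ≤ #𝒜.shatterer := by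
  set S₁ := (𝒜.memberSubfamily a).shatterer
  set S₀ := (𝒜.nonMemberSubfamily a).shatterer
  have hS₁ : ∀ s ∈ S₁, a ∉ s := fun s hs ↦ (mem_shatterer.1 hs).notMem_of_forall_notMem
    fun u hu ↦ (mem_memberSubfamily.1 hu).2
  have hS₀ : ∀ s ∈ S₀, a ∉ s := fun s hs ↦ (mem_shatterer.1 hs).notMem_of_forall_notMem
    fun u hu ↦ (mem_nonMemberSubfamily.1 hu).2
  have hunion : S₁ ∪ S₀ ⊆ 𝒜.shatterer.nonMemberSubfamily a := by
    intro s hs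
    rw [mem_nonMemberSubfamily, mem_shatterer]
    rcases mem_union.1 hs with hs | hs
    · exact ⟨(mem_shatterer.1 hs).of_memberSubfamily, hS₁ s hs⟩
    · exact ⟨(mem_shatterer.1 hs).mono_left (filter_subset _ _), hS₀ s hs⟩
  have hinter : S₁ ∩ S₀ ⊆ 𝒜.shatterer.memberSubfamily a := by
    intro s hs
    rw [mem_inter] at hs
    rw [mem_memberSubfamily, mem_shatterer]
    exact ⟨(mem_shatterer.1 hs.1).insert_of_memberSubfamily_of_nonMemberSubfamily
      (mem_shatterer.1 hs.2), hS₁ s hs.1⟩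
  calc #S₁ + #S₀ = #(S₁ ∪ S₀) + #(S₁ ∩ S₀) := (card_union_add_card_inter _ _).symm
    _ ≤ #(𝒜.shatterer.nonMemberSubfamily a) + #(𝒜.shatterer.memberSubfamily a) :=
        add_le_add (card_le_card hunion) (card_le_card hinter)
    _ = #𝒜.shatterer := by
        rw [add_comm, card_memberSubfamily_add_card_nonMemberSubfamily]

lemma IsShatteringExtremal.nonMemberSubfamily (h𝒜 : 𝒜.IsShatteringExtremal) (a : α) :
    (𝒜.nonMemberSubfamily a).IsShatteringExtremal := by
  have h₁ := card_le_card_shatterer (𝒜.memberSubfamily a)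
  have h₀ := card_le_card_shatterer (𝒜.nonMemberSubfamily a)
  have hsplit := card_shatterer_memberSubfamily_add_card_shatterer_nonMemberSubfamily_le a 𝒜
  have hcard := card_memberSubfamily_add_card_nonMemberSubfamily a 𝒜
  unfold IsShatteringExtremal at h𝒜 ⊢
  omega

lemma IsShatteringExtremal.filter_disjoint (h𝒜 : 𝒜.IsShatteringExtremal) (s : Finset α) :
    (𝒜.filter (Disjoint · s)).IsShatteringExtremal := by
  induction s using Finset.induction_on with
  | empty => simpa using h𝒜
  | insert a s _ ih =>
    convert ih.nonMemberSubfamily a using 2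
    ext u
    simp only [mem_nonMemberSubfamily, mem_filter, disjoint_insert_right]
    tauto

lemma card_add_one_le_card_shatterer (hempty : ∅ ∈ 𝒜) (ht : t ∈ 𝒜) : #t + 1 ≤ #𝒜.shatterer := by
  have hsub : insert ∅ (t.map ⟨singleton, singleton_injective⟩) ⊆ 𝒜.shatterer := by
    refine insert_subset (mem_shatterer.2 (shatters_empty.2 ⟨_, hempty⟩)) fun s hs ↦ ?_
    obtain ⟨x, hx, rfl⟩ := mem_map.1 hs
    refine mem_shatterer.2 fun u hu ↦ ?_
    rcases subset_singleton_iff.1 hu with rfl | rfl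
    · exact ⟨∅, hempty, inter_empty _⟩
    · exact ⟨t, ht, inter_eq_left.2 (singleton_subset_iff.2 hx)⟩
  have hempty_map : ∅ ∉ t.map ⟨singleton, singleton_injective⟩ := by simp
  simpa [card_insert_of_notMem hempty_map] using card_le_card hsub

lemma IsShatteringExtremal.exists_singleton_mem (h𝒜 : 𝒜.IsShatteringExtremal) (hempty : ∅ ∈ 𝒜)
    (ht : t ∈ 𝒜) (ht' : t.Nonempty) : ∃ x ∈ t, {x} ∈ 𝒜 := by
  obtain ⟨c, hc, hmin⟩ := exists_min_image ({c ∈ 𝒜 | c ⊆ t ∧ c.Nonempty}) card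
    ⟨t, mem_filter.2 ⟨ht, subset_rfl, ht'⟩⟩
  obtain ⟨hc𝒜, hct, hc'⟩ := mem_filter.1 hc
  set ℬ := 𝒜.filter (Disjoint · (𝒜.sup id \ c))
  have hℬ : ℬ ⊆ {∅, c} := by
    intro u hu
    obtain ⟨hu𝒜, hdisj⟩ := mem_filter.1 hu
    have huc : u ⊆ c := fun x hx ↦ by
      by_contra hxc
      exact disjoint_left.1 hdisj hx (mem_sdiff.2 ⟨le_sup (f := id) hu𝒜 hx, hxc⟩)
    rcases u.eq_empty_or_nonempty with rfl | hu'
    · exact mem_insert_self _ _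
    · exact mem_insert_of_mem <| mem_singleton.2 <| eq_of_subset_of_card_le huc <|
        hmin u (mem_filter.2 ⟨hu𝒜, huc.trans hct, hu'⟩)
  have hemptyℬ : ∅ ∈ ℬ := mem_filter.2 ⟨hempty, disjoint_empty_left _⟩
  have hcℬ : c ∈ ℬ := mem_filter.2 ⟨hc𝒜, disjoint_sdiff⟩
  have hcard : #c + 1 ≤ 2 := calc
    #c + 1 ≤ #ℬ.shatterer := card_add_one_le_card_shatterer hemptyℬ hcℬ
    _ = #ℬ := (h𝒜.filter_disjoint _)
    _ ≤ #({∅, c} : Finset (Finset α)) := card_le_card hℬ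
    _ ≤ 2 := card_le_two
  obtain ⟨x, rfl⟩ := card_eq_one.1 (show #c = 1 by have := hc'.card_pos; omega)
  exact ⟨x, hct (mem_singleton_self x), hc𝒜⟩

lemma Shatters.image_symmDiff (hs : 𝒜.Shatters s) (u : Finset α) :
    (𝒜.image (· ∆ u)).Shatters s := by
  intro t ht
  obtain ⟨v, hv, hsv⟩ := hs (t := t ∆ (s ∩ u)) fun x hx ↦ by
    rcases mem_symmDiff.1 hx with ⟨hx, -⟩ | ⟨hx, -⟩
    exacts [ht hx, mem_of_mem_inter_left hx]
  refine ⟨v ∆ u, mem_image_of_mem _ hv, ?_⟩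
  rw [show s ∩ (v ∆ u) = (s ∩ v) ∆ (s ∩ u) from inf_symmDiff_distrib_left s v u, hsv,
    symmDiff_symmDiff_cancel_right]

lemma image_symmDiff_image_symmDiff (𝒜 : Finset (Finset α)) (u : Finset α) :
    (𝒜.image (· ∆ u)).image (· ∆ u) = 𝒜 := by
  simp [image_image, Function.comp_def]

lemma shatterer_image_symmDiff (𝒜 : Finset (Finset α)) (u : Finset α) :
    (𝒜.image (· ∆ u)).shatterer = 𝒜.shatterer := by
  ext s
  simp only [mem_shatterer]
  refine ⟨fun hs ↦ ?_, fun hs ↦ hs.image_symmDiff u⟩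
  simpa only [image_symmDiff_image_symmDiff] using hs.image_symmDiff u

lemma IsShatteringExtremal.image_symmDiff (h𝒜 : 𝒜.IsShatteringExtremal) (u : Finset α) :
    (𝒜.image (· ∆ u)).IsShatteringExtremal := by
  rw [IsShatteringExtremal, shatterer_image_symmDiff,
    card_image_of_injective _ (symmDiff_left_injective u)]
  exact h𝒜

lemma IsShatteringExtremal.exists_nodup_toFinset_take_mem (h𝒜 : 𝒜.IsShatteringExtremal)
    (hempty : ∅ ∈ 𝒜) (ht : t ∈ 𝒜) :
    ∃ l : List α, l.Nodup ∧ l.toFinset = t ∧ ∀ j, (l.take j).toFinset ∈ 𝒜 := by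
  induction hk : #t generalizing 𝒜 t with
  | zero => exact ⟨[], List.nodup_nil, by simp_all, by simpa using hempty⟩
  | succ k ih =>
    obtain ⟨x, hxt, hx⟩ := h𝒜.exists_singleton_mem hempty ht (card_pos.1 (hk ▸ k.succ_pos))
    -- A chain for `t.erase x` in the translate of `𝒜` by `{x}`, prefixed by `x`, is one for `t`.
    have herase : t ∆ {x} = t.erase x := by
      rw [symmDiff_of_ge (singleton_subset_iff.2 hxt), sdiff_singleton_eq_erase]
    obtain ⟨l, hl, hlt, htake⟩ := ih (h𝒜.image_symmDiff {x})
      (mem_image.2 ⟨{x}, hx, symmDiff_self _⟩) (mem_image.2 ⟨t, ht, herase⟩)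
      (by rw [card_erase_of_mem hxt, hk]; rfl)
    have hxl : x ∉ l := by simp [← List.mem_toFinset, hlt]
    refine ⟨x :: l, List.nodup_cons.2 ⟨hxl, hl⟩, by simp [hlt, insert_erase hxt], ?_⟩
    rintro (_ | j)
    · simpa using hempty
    · obtain ⟨u, hu, hux⟩ := mem_image.1 (htake j)
      have hxj : x ∉ (l.take j).toFinset := by
        simpa using fun h ↦ hxl (List.mem_of_mem_take h)
      rw [List.take_succ_cons, List.toFinset_cons, ← union_singleton,
        ← symmDiff_eq_union (disjoint_singleton_right.2 hxj), ← hux,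
        symmDiff_symmDiff_cancel_right]
      exact hu

end Finset

lemma card_filter_powerset_card_le {α : Type*} (A : Finset α) (d : ℕ) :
    #{B ∈ A.powerset | #B ≤ d} = Phi d #A := by
  rw [card_eq_sum_card_fiberwise (f := card) (t := range (d + 1))
    fun B hB ↦ mem_range.2 (Nat.lt_succ_of_le (mem_filter.1 hB).2)]
  refine sum_congr rfl fun i hi ↦ ?_
  rw [← card_powersetCard, powersetCard_eq_filter, filter_filter]
  congr 1
  exact filter_congr fun B _ ↦ ⟨And.right, fun h ↦ ⟨h ▸ Nat.lt_succ_iff.1 (mem_range.1 hi), h⟩⟩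

lemma phi_card_eq_two_pow_iff {α : Type*} (A : Finset α) (d : ℕ) :
    Phi d #A = 2 ^ #A ↔ #A ≤ d := by
  rw [← card_filter_powerset_card_le, ← card_powerset, card_filter_eq_iff]
  exact ⟨fun h ↦ h A (mem_powerset_self A),
    fun h B hB ↦ (Finset.card_le_card (Finset.mem_powerset.1 hB)).trans h⟩

open scoped Classical in
noncomputable def traceFinset (C : Set (Set X)) (A : Finset X) : Finset (Finset X) :=
  {b ∈ A.powerset | ∃ c ∈ C, c ∩ ↑A = ↑b}

section traceFinset

variable {C : Set (Set X)} {A B b : Finset X} {d : ℕ}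

lemma mem_traceFinset : b ∈ traceFinset C A ↔ b ⊆ A ∧ ∃ c ∈ C, c ∩ ↑A = ↑b := by
  simp [traceFinset]

lemma coe_filter_mem (c : Set X) (A : Finset X) [DecidablePred (· ∈ c)] :
    (↑(A.filter (· ∈ c)) : Set X) = c ∩ ↑A := by
  ext x
  simp [and_comm]

lemma tr_eq_image_coe_traceFinset (C : Set (Set X)) (A : Finset X) :
    Tr C ↑A = (↑) '' (traceFinset C A : Set (Finset X)) := by
  classical
  ext s
  simp only [Tr, Set.mem_image, mem_coe, mem_traceFinset]
  constructor
  · rintro ⟨c, hc, rfl⟩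
    exact ⟨A.filter (· ∈ c), ⟨filter_subset _ _, c, hc, (coe_filter_mem c A).symm⟩,
      coe_filter_mem c A⟩
  · rintro ⟨b, ⟨-, c, hc, hcb⟩, rfl⟩
    exact ⟨c, hc, hcb⟩

lemma IsMaximum.card_traceFinset (hC : IsMaximum C d) (A : Finset X) :
    #(traceFinset C A) = Phi d #A := by
  rw [← hC.2 A, tr_eq_image_coe_traceFinset, ncard_image_of_injective _ coe_injective,
    ncard_coe_finset]

lemma IsMaximum.traceFinset_eq_powerset_iff (hC : IsMaximum C d) :
    traceFinset C B = B.powerset ↔ #B ≤ d := by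
  have hsub : traceFinset C B ⊆ B.powerset :=
    fun b hb ↦ Finset.mem_powerset.2 (mem_traceFinset.1 hb).1
  have hle : Phi d #B ≤ 2 ^ #B := by
    rw [← card_filter_powerset_card_le, ← card_powerset]
    exact card_filter_le _ _
  rw [← eq_iff_card_le_of_subset hsub, hC.card_traceFinset, card_powerset, hle.ge_iff_eq,
    phi_card_eq_two_pow_iff]

lemma image_inter_traceFinset [DecidableEq X] (hBA : B ⊆ A) :
    (traceFinset C A).image (B ∩ ·) = traceFinset C B := by
  have hB : ∀ c : Set X, ↑B ∩ (c ∩ ↑A) = c ∩ ↑B := fun c ↦ by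
    rw [Set.inter_left_comm, Set.inter_eq_left.2 (coe_subset.2 hBA)]
  ext b
  simp only [Finset.mem_image, mem_traceFinset]
  constructor
  · rintro ⟨u, ⟨-, c, hc, hcu⟩, rfl⟩
    exact ⟨inter_subset_left, c, hc, by rw [coe_inter, ← hcu, hB]⟩
  · rintro ⟨-, c, hc, hcb⟩
    classical
    refine ⟨A.filter (· ∈ c), ⟨filter_subset _ _, c, hc, (coe_filter_mem c A).symm⟩, ?_⟩
    rw [← coe_inj, coe_inter, coe_filter_mem, hB, hcb]

lemma IsMaximum.shatterer_traceFinset [DecidableEq X] (hC : IsMaximum C d) (A : Finset X) :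
    (traceFinset C A).shatterer = {B ∈ A.powerset | #B ≤ d} := by
  ext B
  rw [mem_shatterer, mem_filter, Finset.mem_powerset]
  refine ⟨fun h ↦ ?_, fun ⟨hBA, hB⟩ ↦ ?_⟩
  · obtain ⟨u, hu, hBu⟩ := h.exists_superset
    have hBA : B ⊆ A := hBu.trans (mem_traceFinset.1 hu).1
    rw [shatters_iff, image_inter_traceFinset hBA, hC.traceFinset_eq_powerset_iff] at h
    exact ⟨hBA, h⟩
  · rwa [shatters_iff, image_inter_traceFinset hBA, hC.traceFinset_eq_powerset_iff]

lemma IsMaximum.isShatteringExtremal_traceFinset [DecidableEq X] (hC : IsMaximum C d)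
    (A : Finset X) : (traceFinset C A).IsShatteringExtremal := by
  rw [IsShatteringExtremal, hC.shatterer_traceFinset, card_filter_powerset_card_le,
    hC.card_traceFinset]

end traceFinset

lemma hasOrderProp_length_of_nodup {C : Set (Set X)} {l : List X} (hl : l.Nodup)
    (h : ∀ j, ∃ c ∈ C, ∀ x ∈ l, x ∈ c ↔ x ∈ l.take j) : HasOrderProp C l.length := by
  classical
  choose f hfC hf using h
  refine ⟨fun i ↦ l[i.1], fun j ↦ f j, fun j ↦ hfC j, fun i j ↦ ?_⟩
  dsimp only
  rw [hf _ _ (List.getElem_mem _), List.mem_take_iff_idxOf_lt (List.getElem_mem _),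
    hl.idxOf_getElem, Fin.lt_def]

lemma IsMaximum.hasOrderProp {C : Set (Set X)} {d : ℕ} (hC : IsMaximum C d)
    (h : ∃ c₁ ∈ C, ∃ c₂ ∈ C, (c₁ ∆ c₂).Infinite) (N : ℕ) : HasOrderProp C N := by
  classical
  obtain ⟨s₁, hs₁, s₂, hs₂, hinf⟩ : ∃ s₁ ∈ C, ∃ s₂ ∈ C, (s₂ \ s₁).Infinite := by
    obtain ⟨c₁, hc₁, c₂, hc₂, h⟩ := h
    rcases Set.infinite_union.1 h with h | h
    exacts [⟨c₂, hc₂, c₁, hc₁, h⟩, ⟨c₁, hc₁, c₂, hc₂, h⟩]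
  obtain ⟨A, hA, rfl⟩ := hinf.exists_subset_card_eq N
  have hempty : ∅ ∈ traceFinset C A := mem_traceFinset.2 ⟨empty_subset _, s₁, hs₁,
    by simpa [Set.eq_empty_iff_forall_notMem] using fun x h₁ hx ↦ (hA hx).2 h₁⟩
  have hAA : A ∈ traceFinset C A := mem_traceFinset.2 ⟨subset_rfl, s₂, hs₂,
    Set.inter_eq_right.2 (hA.trans sdiff_subset)⟩
  obtain ⟨l, hl, hlA, htake⟩ :=
    (hC.isShatteringExtremal_traceFinset A).exists_nodup_toFinset_take_mem hempty hAA
  rw [← hlA, List.toFinset_card_of_nodup hl]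
  refine hasOrderProp_length_of_nodup hl fun j ↦ ?_
  obtain ⟨-, c, hc, hcA⟩ := mem_traceFinset.1 (htake j)
  refine ⟨c, hc, fun x hx ↦ ?_⟩
  have hxA : x ∈ (A : Set X) := by simpa [← hlA] using hx
  rw [← List.mem_toFinset, ← Finset.mem_coe, ← hcA]
  exact ⟨fun hxc ↦ ⟨hxc, hxA⟩, And.left⟩

/-- A subfamily of `[X]^{≤n} Δ A` is stable; conversely, a `d`-maximum family on
an infinite set containing two sets with infinite symmetric difference is
unstable. -/
theorem stable_iff_subfamily_of_smallSets_symmDiff :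
    (∀ (C : Set (Set X)) (n : ℕ) (A : Set X),
      C ⊆ (fun B => B ∆ A) '' {B : Set X | B.Finite ∧ B.ncard ≤ n} →
      ∀ N : ℕ, 2 * n + 2 < N → ¬ HasOrderProp C N) ∧
    (∀ (C : Set (Set X)) (d : ℕ), Infinite X → IsMaximum C d →
      (∃ c₁ ∈ C, ∃ c₂ ∈ C, (c₁ ∆ c₂).Infinite) →
      ∀ N : ℕ, HasOrderProp C N) :=
  ⟨fun _ _ _ hC _ hN ↦ not_hasOrderProp_of_subset_image_symmDiff hC hN,
    fun _ _ _ hC h ↦ hC.hasOrderProp h⟩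
end

section
/- Welzl's lemma: if C ⊆ 2^X is d-maximum, then for every finite B ⊆ X and every t ∈ C(B) with |B| ≥ d, there exists a d-element subset A ⊆ B that is internally shattered by t, i.e., the set of s ∈ C(B) agreeing with t on B \ A has cardinality exactly 2^d. -/
open Set

variable {X : Type*}

namespace WelzlAux
open Finset
variable {X : Type*} [DecidableEq X]

lemma phi_zero (n : ℕ) : Phi 0 n = 1 := by simp [Phi]

lemma phi_self (d : ℕ) : Phi d d = 2 ^ d := by
  rw [Phi, Nat.sum_range_choose]

lemma phi_succ_succ (e n : ℕ) : Phi (e+1) (n+1) = Phi (e+1) n + Phi e n := by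
  induction e with
  | zero => simp [Phi, Finset.sum_range_succ]; omega
  | succ e ih =>
    show Phi (e+2) (n+1) = Phi (e+2) n + Phi (e+1) n
    have h0 : Phi (e+2) (n+1) = Phi (e+1) (n+1) + (n+1).choose (e+2) := by
      simp [Phi, Finset.sum_range_succ]
    have h1 : Phi (e+2) n = Phi (e+1) n + n.choose (e+2) := by
      simp [Phi, Finset.sum_range_succ]
    have h2 : Phi (e+1) n = Phi e n + n.choose (e+1) := by
      simp [Phi, Finset.sum_range_succ]
    have h3 : (n+1).choose (e+2) = n.choose (e+1) + n.choose (e+2) := Nat.choose_succ_succ _ _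
    omega

lemma phi_lt_two_pow {d m : ℕ} (h : d < m) : Phi d m < 2 ^ m := by
  rw [← Nat.sum_range_choose m, Phi]
  exact Finset.sum_lt_sum_of_subset (i := m) (Finset.range_subset_range.2 (by omega))
    (Finset.mem_range.2 (by omega)) (by simp only [Finset.mem_range]; omega)
    (by simp [Nat.choose_self]) (fun _ _ _ => Nat.zero_le _)

/-- trace of a finite family -/
def trF (F : Finset (Finset X)) (A : Finset X) : Finset (Finset X) := F.image (· ∩ A)

/-- reduction of a finite family in direction x -/
def redF (x : X) (F : Finset (Finset X)) : Finset (Finset X) :=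
  F.filter (fun f => x ∉ f ∧ insert x f ∈ F)

/-- maximum class of dimension d on ground set B (counting version) -/
def MaxOn (d : ℕ) (B : Finset X) (F : Finset (Finset X)) : Prop :=
  (∀ f ∈ F, f ⊆ B) ∧ ∀ A ⊆ B, (trF F A).card = Phi d A.card

lemma trF_self {F : Finset (Finset X)} {B : Finset X} (h : ∀ f ∈ F, f ⊆ B) :
    trF F B = F := by
  ext g
  simp only [trF, Finset.mem_image]
  constructor
  · rintro ⟨f, hf, rfl⟩
    rwa [Finset.inter_eq_left.2 (h f hf)]
  · intro hg
    exact ⟨g, hg, Finset.inter_eq_left.2 (h g hg)⟩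

lemma trF_trF {F : Finset (Finset X)} {A A' : Finset X} (h : A' ⊆ A) :
    trF (trF F A) A' = trF F A' := by
  simp only [trF, Finset.image_image]
  apply Finset.image_congr
  intro f _
  simp only [Function.comp_apply]
  rw [Finset.inter_assoc, Finset.inter_eq_right.2 h]

lemma shatters_subset {F : Finset (Finset X)} {B S : Finset X} (hB : ∀ f ∈ F, f ⊆ B)
    (hS : F.Shatters S) : S ⊆ B := by
  obtain ⟨u, hu, hSu⟩ := hS (Finset.Subset.refl S)
  exact (Finset.inter_eq_left.1 hSu).trans (hB u hu)

lemma card_powerset_filter (B : Finset X) (d : ℕ) :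
    ((B.powerset).filter (fun S => S.card ≤ d)).card = Phi d B.card := by
  have h : (B.powerset).filter (fun S => S.card ≤ d)
      = (Finset.range (d+1)).biUnion (fun i => B.powersetCard i) := by
    ext S
    simp only [Finset.mem_filter, Finset.mem_powerset, Finset.mem_biUnion, Finset.mem_range,
      Finset.mem_powersetCard, Nat.lt_succ_iff]
    constructor
    · rintro ⟨h1, h2⟩; exact ⟨S.card, h2, h1, rfl⟩
    · rintro ⟨i, hi, h1, rfl⟩; exact ⟨h1, hi⟩
  rw [h, Finset.card_biUnion, Phi]
  · exact Finset.sum_congr rfl fun i _ => Finset.card_powersetCard i B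
  · intro i _ j _ hij
    simp only [Finset.disjoint_left]
    intro S hS hS'
    rw [Finset.mem_powersetCard] at hS hS'
    exact hij (hS.2 ▸ hS'.2)

lemma sauer {F : Finset (Finset X)} {B : Finset X} {d : ℕ}
    (hB : ∀ f ∈ F, f ⊆ B) (hd : ∀ S, F.Shatters S → S.card ≤ d) :
    F.card ≤ Phi d B.card := by
  calc F.card ≤ F.shatterer.card := F.card_le_card_shatterer
  _ ≤ ((B.powerset).filter (fun S => S.card ≤ d)).card := by
      apply Finset.card_le_card
      intro S hS
      rw [Finset.mem_shatterer] at hS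
      rw [Finset.mem_filter, Finset.mem_powerset]
      exact ⟨shatters_subset hB hS, hd S hS⟩
  _ = Phi d B.card := card_powerset_filter B d

lemma maxOn_shatters_le {F : Finset (Finset X)} {B : Finset X} {d : ℕ}
    (h : MaxOn d B F) : ∀ S, F.Shatters S → S.card ≤ d := by
  intro S hS
  by_contra hc
  push_neg at hc
  have hSB : S ⊆ B := shatters_subset h.1 hS
  have hcard := h.2 S hSB
  have hsub : S.powerset ⊆ trF F S := by
    intro u hu
    rw [Finset.mem_powerset] at hu
    obtain ⟨f, hf, hfu⟩ := hS hu
    exact Finset.mem_image.2 ⟨f, hf, by rw [Finset.inter_comm]; exact hfu⟩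
  have hle := Finset.card_le_card hsub
  rw [Finset.card_powerset, hcard] at hle
  exact absurd hle (not_le.2 (phi_lt_two_pow hc))

lemma trF_shatters_le {F : Finset (Finset X)} {A : Finset X} {d : ℕ}
    (h : ∀ S, F.Shatters S → S.card ≤ d) :
    ∀ S, (trF F A).Shatters S → S.card ≤ d := by
  intro S hS
  apply h
  have hSA : S ⊆ A := by
    obtain ⟨u, hu, hSu⟩ := hS (Finset.Subset.refl S)
    obtain ⟨f, _, rfl⟩ := Finset.mem_image.1 hu
    exact (Finset.inter_eq_left.1 hSu).trans Finset.inter_subset_right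
  intro t ht
  obtain ⟨u, hu, hSu⟩ := hS ht
  obtain ⟨f, hf, rfl⟩ := Finset.mem_image.1 hu
  refine ⟨f, hf, ?_⟩
  rw [← hSu]
  ext y
  simp only [Finset.mem_inter]
  exact ⟨fun ⟨a, b⟩ => ⟨a, b, hSA a⟩, fun ⟨a, b, _⟩ => ⟨a, b⟩⟩

lemma redF_subset_erase {F : Finset (Finset X)} {B : Finset X} (hB : ∀ f ∈ F, f ⊆ B) (x : X) :
    ∀ f ∈ redF x F, f ⊆ B.erase x := by
  intro f hf
  rw [redF, Finset.mem_filter] at hf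
  exact Finset.subset_erase.2 ⟨hB f hf.1, hf.2.1⟩

lemma redF_shatters_le {F : Finset (Finset X)} {e : ℕ} {x : X}
    (h : ∀ S, F.Shatters S → S.card ≤ e + 1) :
    ∀ S, (redF x F).Shatters S → S.card ≤ e := by
  intro S hS
  have hxS : x ∉ S := by
    obtain ⟨u, hu, hSu⟩ := hS (Finset.Subset.refl S)
    rw [redF, Finset.mem_filter] at hu
    exact fun hc => hu.2.1 (Finset.inter_eq_left.1 hSu hc)
  have hshat : F.Shatters (insert x S) := by
    intro t ht
    by_cases hxt : x ∈ t
    · have het : t.erase x ⊆ S := by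
        intro y hy
        rw [Finset.mem_erase] at hy
        rcases Finset.mem_insert.1 (ht hy.2) with h' | h'
        · exact absurd h' hy.1
        · exact h'
      obtain ⟨g, hg, hgt⟩ := hS het
      rw [redF, Finset.mem_filter] at hg
      refine ⟨insert x g, hg.2.2, ?_⟩
      rw [Finset.insert_inter_of_mem (Finset.mem_insert_self x g),
        Finset.inter_insert_of_notMem hxS, hgt, Finset.insert_erase hxt]
    · have htS : t ⊆ S := fun y hy => by
        rcases Finset.mem_insert.1 (ht hy) with h' | h'
        · exact absurd (h' ▸ hy) hxt
        · exact h'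
      obtain ⟨g, hg, hgt⟩ := hS htS
      rw [redF, Finset.mem_filter] at hg
      refine ⟨g, hg.1, ?_⟩
      rw [Finset.insert_inter_of_notMem hg.2.1]
      exact hgt
  have := h _ hshat
  rw [Finset.card_insert_of_notMem hxS] at this
  omega

lemma trF_erase_eq {F : Finset (Finset X)} {B : Finset X} (hB : ∀ f ∈ F, f ⊆ B) (x : X) :
    trF F (B.erase x) = F.image (fun f => f.erase x) := by
  unfold trF
  apply Finset.image_congr
  intro f hf
  ext y
  simp only [Finset.mem_inter, Finset.mem_erase]
  exact ⟨fun ⟨a, b⟩ => ⟨b.1, a⟩, fun ⟨a, b⟩ => ⟨b, a, hB f hf b⟩⟩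

lemma card_trF_erase_add {F : Finset (Finset X)} {B : Finset X}
    (hB : ∀ f ∈ F, f ⊆ B) (x : X) :
    (trF F (B.erase x)).card + (redF x F).card = F.card := by
  classical
  rw [trF_erase_eq hB x]
  set F0 := F.filter (fun f => x ∉ f) with hF0
  set F1 := F.filter (fun f => x ∈ f) with hF1
  have hsplit : F0.card + F1.card = F.card := by
    rw [hF0, hF1]
    have h := Finset.card_filter_add_card_filter_not (s := F) (p := fun f => x ∉ f)
    simpa using h
  have hunion : F.image (fun f => f.erase x) = F0 ∪ F1.image (fun f => f.erase x) := by
    have hFeq : F0 ∪ F1 = F := by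
      rw [hF0, hF1]
      have h := Finset.filter_union_filter_not_eq (fun f => x ∉ f) F
      simpa using h
    conv_lhs => rw [← hFeq]
    rw [Finset.image_union]
    congr 1
    ext g
    simp only [Finset.mem_image, hF0, Finset.mem_filter]
    constructor
    · rintro ⟨f, ⟨hf, hxf⟩, rfl⟩
      rw [Finset.erase_eq_self.2 hxf]
      exact ⟨hf, hxf⟩
    · rintro ⟨hg, hxg⟩
      exact ⟨g, ⟨hg, hxg⟩, Finset.erase_eq_self.2 hxg⟩
  have hcard1 : (F1.image (fun f => f.erase x)).card = F1.card := by
    apply Finset.card_image_of_injOn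
    intro f hf g hg hfg
    rw [hF1, Finset.mem_coe, Finset.mem_filter] at hf hg
    replace hfg : f.erase x = g.erase x := hfg
    rw [← Finset.insert_erase hf.2, ← Finset.insert_erase hg.2, hfg]
  have hinter : F0 ∩ F1.image (fun f => f.erase x) = redF x F := by
    ext g
    simp only [Finset.mem_inter, hF0, hF1, Finset.mem_filter, Finset.mem_image, redF]
    constructor
    · rintro ⟨⟨hg, hxg⟩, f, ⟨hf, hxf⟩, rfl⟩
      exact ⟨hg, Finset.notMem_erase x f, by rwa [Finset.insert_erase hxf]⟩
    · rintro ⟨hg, hxg, hins⟩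
      exact ⟨⟨hg, hxg⟩, insert x g, ⟨hins, Finset.mem_insert_self x g⟩,
        Finset.erase_insert hxg⟩
  rw [hunion, ← hinter]
  have := Finset.card_union_add_card_inter F0 (F1.image (fun f => f.erase x))
  omega

lemma trF_subset_ground {F : Finset (Finset X)} (A : Finset X) :
    ∀ g ∈ trF F A, g ⊆ A := by
  intro g hg
  obtain ⟨f, _, rfl⟩ := Finset.mem_image.1 hg
  exact Finset.inter_subset_right

lemma maxOn_of_card {k : ℕ} : ∀ (n : ℕ) (B : Finset X) (G : Finset (Finset X)),
    B.card ≤ n → (∀ f ∈ G, f ⊆ B) → (∀ S, G.Shatters S → S.card ≤ k) →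
    G.card = Phi k B.card → MaxOn k B G := by
  intro n
  induction n with
  | zero =>
    intro B G hn hGB hsh hcard
    refine ⟨hGB, fun A hA => ?_⟩
    have hB : B = ∅ := Finset.card_eq_zero.1 (Nat.le_zero.1 hn)
    have hA0 : A = ∅ := Finset.subset_empty.1 (hB ▸ hA)
    subst hB; subst hA0
    rw [trF_self hGB, hcard]
  | succ n ih =>
    intro B G hn hGB hsh hcard
    refine ⟨hGB, fun A hA => ?_⟩
    by_cases hAB : A = B
    · subst hAB; rw [trF_self hGB, hcard]
    · obtain ⟨x, hxB, hxA⟩ : ∃ x, x ∈ B ∧ x ∉ A := by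
        by_contra hc
        push_neg at hc
        exact hAB (Finset.Subset.antisymm hA hc)
      set B' := B.erase x with hB'
      set G' := trF G B' with hG'
      have hAB' : A ⊆ B' := fun y hy => Finset.mem_erase.2 ⟨fun h => hxA (h ▸ hy), hA hy⟩
      have hB'card : B'.card + 1 = B.card := by
        rw [hB', Finset.card_erase_of_mem hxB]
        have : 0 < B.card := Finset.card_pos.2 ⟨x, hxB⟩
        omega
      have hG'B' : ∀ f ∈ G', f ⊆ B' := trF_subset_ground B'
      have hsh' : ∀ S, G'.Shatters S → S.card ≤ k := trF_shatters_le hsh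
      have hcard' : G'.card = Phi k B'.card := by
        cases k with
        | zero =>
          obtain ⟨g, hg⟩ := Finset.card_eq_one.1 (by rw [hcard, phi_zero])
          rw [hG', hg, phi_zero]
          simp [trF]
        | succ e =>
          have h8 := card_trF_erase_add hGB x
          have hred := sauer (redF_subset_erase hGB x) (redF_shatters_le hsh)
          have hup := sauer hG'B' hsh'
          have hphi := phi_succ_succ e B'.card
          have hcard2 : G.card = Phi (e+1) B'.card + Phi e B'.card := by
            rw [hcard, ← hB'card, hphi]
          have h8' : G'.card + (redF x G).card = G.card := by
            rw [hG', hB']; exact h8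
          have hred' : (redF x G).card ≤ Phi e B'.card := by
            rw [hB']; exact hred
          omega
      have := ih B' G' (by omega) hG'B' hsh' hcard'
      rw [← trF_trF hAB']
      exact this.2 A hAB'

lemma trF_maxOn {F : Finset (Finset X)} {B A : Finset X} {d : ℕ}
    (h : MaxOn d B F) (hA : A ⊆ B) : MaxOn d A (trF F A) := by
  refine ⟨trF_subset_ground A, fun A' hA' => ?_⟩
  rw [trF_trF hA']
  exact h.2 A' (hA'.trans hA)

lemma redF_maxOn {F : Finset (Finset X)} {B : Finset X} {e : ℕ} {x : X}
    (h : MaxOn (e+1) B F) (hx : x ∈ B) : MaxOn e (B.erase x) (redF x F) := by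
  apply maxOn_of_card (B.erase x).card _ _ le_rfl (redF_subset_erase h.1 x)
    (redF_shatters_le (maxOn_shatters_le h))
  have h8 := card_trF_erase_add h.1 x
  have h1 : (trF F (B.erase x)).card = Phi (e+1) (B.erase x).card :=
    h.2 _ (Finset.erase_subset x B)
  have h2 : F.card = Phi (e+1) B.card := by
    rw [← trF_self h.1]
    exact h.2 B Finset.Subset.rfl
  have hB'card : (B.erase x).card + 1 = B.card := by
    rw [Finset.card_erase_of_mem hx]
    have : 0 < B.card := Finset.card_pos.2 ⟨x, hx⟩
    omega
  have hphi := phi_succ_succ e (B.erase x).card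
  rw [← hB'card, hphi] at h2
  omega

lemma union_insert_erase {r u : Finset X} {x : X} (hxu : x ∈ u) :
    insert x (r ∪ u.erase x) = r ∪ u := by
  ext y
  simp only [Finset.mem_insert, Finset.mem_union, Finset.mem_erase]
  by_cases hy : y = x
  · subst hy; simp [hxu]
  · simp [hy]

lemma cube_exists_unique : ∀ (d : ℕ) (B : Finset X) (F : Finset (Finset X)) (A : Finset X),
    MaxOn d B F → A ⊆ B → A.card = d →
    ∃! r, r ⊆ B \ A ∧ ∀ u ⊆ A, r ∪ u ∈ F := by
  intro d
  induction d with
  | zero =>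
    intro B F A hF hAB hA
    have hA0 : A = ∅ := Finset.card_eq_zero.1 hA
    subst hA0
    have hcard : F.card = 1 := by
      have := hF.2 B Finset.Subset.rfl
      rw [trF_self hF.1, phi_zero] at this
      exact this
    obtain ⟨g, hg⟩ := Finset.card_eq_one.1 hcard
    refine ⟨g, ⟨?_, ?_⟩, ?_⟩
    · rw [Finset.sdiff_empty]
      exact hF.1 g (hg ▸ Finset.mem_singleton_self g)
    · intro u hu
      rw [Finset.subset_empty.1 hu, Finset.union_empty, hg]
      exact Finset.mem_singleton_self g
    · rintro r ⟨_, hr2⟩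
      have := hr2 ∅ Finset.Subset.rfl
      rw [Finset.union_empty, hg, Finset.mem_singleton] at this
      exact this
  | succ e ih =>
    intro B F A hF hAB hA
    obtain ⟨x, hxA⟩ : A.Nonempty := Finset.card_pos.1 (by omega)
    have hxB := hAB hxA
    set A' := A.erase x with hA'def
    have hA'card : A'.card = e := by
      rw [hA'def, Finset.card_erase_of_mem hxA, hA]
      omega
    have hred := redF_maxOn hF hxB
    have hA'sub : A' ⊆ B.erase x := by
      rw [hA'def]; exact Finset.erase_subset_erase x hAB
    obtain ⟨r, ⟨hr1, hr2⟩, hru⟩ := ih (B.erase x) (redF x F) A' hred hA'sub hA'card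
    have hBA : (B.erase x) \ A' = B \ A := by
      ext y
      simp only [Finset.mem_sdiff, Finset.mem_erase, hA'def]
      constructor
      · rintro ⟨⟨hyx, hyB⟩, hyA⟩
        exact ⟨hyB, fun hc => hyA ⟨hyx, hc⟩⟩
      · rintro ⟨hyB, hyA⟩
        have hyx : y ≠ x := fun hc => hyA (hc ▸ hxA)
        exact ⟨⟨hyx, hyB⟩, fun hc => hyA hc.2⟩
    rw [hBA] at hr1
    refine ⟨r, ⟨hr1, ?_⟩, ?_⟩
    · intro u hu
      have hu' : u.erase x ⊆ A' := by rw [hA'def]; exact Finset.erase_subset_erase x hu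
      have h1 := hr2 (u.erase x) hu'
      rw [redF, Finset.mem_filter] at h1
      by_cases hxu : x ∈ u
      · rw [← union_insert_erase hxu]
        exact h1.2.2
      · rw [Finset.erase_eq_self.2 hxu] at h1
        exact h1.1
    · rintro r' ⟨h1', h2'⟩
      apply hru
      have hxr' : x ∉ r' := fun hc => (Finset.mem_sdiff.1 (h1' hc)).2 hxA
      refine ⟨by rw [hBA]; exact h1', ?_⟩
      intro u hu
      have huA : u ⊆ A := hu.trans (hA'def ▸ Finset.erase_subset x A)
      have hxu : x ∉ u := fun hc => (Finset.mem_erase.1 (hA'def ▸ hu hc)).1 rfl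
      rw [redF, Finset.mem_filter]
      refine ⟨h2' u huA, ?_, ?_⟩
      · simp [Finset.mem_union, hxr', hxu]
      · rw [show insert x (r' ∪ u) = r' ∪ insert x u from (Finset.union_insert x r' u).symm]
        exact h2' _ (Finset.insert_subset hxA huA)

lemma mem_trF {F : Finset (Finset X)} {A g : Finset X} :
    g ∈ trF F A ↔ ∃ f ∈ F, f ∩ A = g := Finset.mem_image

lemma welzl_fin : ∀ (n : ℕ) (B : Finset X) (F : Finset (Finset X)) (d : ℕ),
    B.card ≤ n → MaxOn d B F → d ≤ B.card → ∀ t ∈ F,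
    ∃ A, A ⊆ B ∧ A.card = d ∧ ∀ u ⊆ A, (t \ A) ∪ u ∈ F := by
  intro n
  induction n with
  | zero =>
    intro B F d hn hF hd t ht
    refine ⟨∅, Finset.empty_subset _, by simp only [Finset.card_empty]; omega, ?_⟩
    intro u hu
    rw [Finset.subset_empty.1 hu, Finset.union_empty, Finset.sdiff_empty]
    exact ht
  | succ n ih =>
    intro B F d hn hF hdB t ht
    rcases Nat.eq_zero_or_pos d with rfl | hdpos
    · refine ⟨∅, Finset.empty_subset _, Finset.card_empty, ?_⟩
      intro u hu
      rw [Finset.subset_empty.1 hu, Finset.union_empty, Finset.sdiff_empty]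
      exact ht
    have htB : t ⊆ B := hF.1 t ht
    rcases eq_or_lt_of_le hdB with hEq | hlt
    · refine ⟨B, Finset.Subset.rfl, hEq.symm, ?_⟩
      have hFcard : F.card = 2 ^ d := by
        have h0 := hF.2 B Finset.Subset.rfl
        rw [trF_self hF.1] at h0
        rw [h0, ← hEq, phi_self]
      have hFpow : F = B.powerset := by
        apply Finset.eq_of_subset_of_card_le
        · intro f hf; exact Finset.mem_powerset.2 (hF.1 f hf)
        · rw [Finset.card_powerset, hFcard, hEq]
      intro u hu
      rw [Finset.sdiff_eq_empty_iff_subset.2 htB, Finset.empty_union, hFpow]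
      exact Finset.mem_powerset.2 hu
    · obtain ⟨e, rfl⟩ : ∃ e, d = e + 1 := ⟨d - 1, by omega⟩
      obtain ⟨x, hxB⟩ : B.Nonempty := Finset.card_pos.1 (by omega)
      have hBe : (B.erase x).card + 1 = B.card := by
        rw [Finset.card_erase_of_mem hxB]; omega
      by_cases hcase : t.erase x ∈ redF x F
      · -- subcase 1 : recurse into the reduction
        obtain ⟨A', hA'B', hA'card, hA'cube⟩ :=
          ih (B.erase x) (redF x F) e (by omega) (redF_maxOn hF hxB) (by omega) _ hcase
        have hxA' : x ∉ A' := fun hc => (Finset.mem_erase.1 (hA'B' hc)).1 rfl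
        refine ⟨insert x A',
          Finset.insert_subset hxB (hA'B'.trans (Finset.erase_subset x B)),
          by rw [Finset.card_insert_of_notMem hxA', hA'card], ?_⟩
        intro u hu
        have hu' : u.erase x ⊆ A' := by
          intro y hy
          rw [Finset.mem_erase] at hy
          rcases Finset.mem_insert.1 (hu hy.2) with h' | h'
          · exact absurd h' hy.1
          · exact h'
        have hg := hA'cube (u.erase x) hu'
        rw [redF, Finset.mem_filter] at hg
        have hkey : t \ insert x A' = t.erase x \ A' := by
          ext y
          simp only [Finset.mem_sdiff, Finset.mem_erase, Finset.mem_insert]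
          constructor
          · rintro ⟨hyt, hy⟩
            push_neg at hy
            exact ⟨⟨hy.1, hyt⟩, hy.2⟩
          · rintro ⟨⟨hyx, hyt⟩, hyA⟩
            exact ⟨hyt, fun hc => hc.elim hyx hyA⟩
        by_cases hxu : x ∈ u
        · rw [hkey, ← union_insert_erase hxu]
          exact hg.2.2
        · have heq : (t.erase x \ A') ∪ u = (t.erase x \ A') ∪ u.erase x := by
            rw [Finset.erase_eq_self.2 hxu]
          rw [hkey, heq]
          exact hg.1
      · -- subcase 2 : recurse into the trace
        have hGmax : MaxOn (e+1) (B.erase x) (trF F (B.erase x)) :=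
          trF_maxOn hF (Finset.erase_subset x B)
        have ht'G : t.erase x ∈ trF F (B.erase x) := by
          refine mem_trF.2 ⟨t, ht, ?_⟩
          ext y
          simp only [Finset.mem_inter, Finset.mem_erase]
          exact ⟨fun ⟨a, b⟩ => ⟨b.1, a⟩, fun ⟨a, b⟩ => ⟨b, a, htB b⟩⟩
        obtain ⟨A, hAB', hAcard, hAcube⟩ :=
          ih (B.erase x) (trF F (B.erase x)) (e+1) (by omega) hGmax (by omega) _ ht'G
        have hxA : x ∉ A := fun hc => (Finset.mem_erase.1 (hAB' hc)).1 rfl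
        have hABB : A ⊆ B := hAB'.trans (Finset.erase_subset x B)
        obtain ⟨r, ⟨hr1, hr2⟩, -⟩ := cube_exists_unique (e+1) B F A hF hABB hAcard
        obtain ⟨rg, -, hrguniq⟩ :=
          cube_exists_unique (e+1) (B.erase x) (trF F (B.erase x)) A hGmax hAB' hAcard
        have hrsub : r ⊆ B := hr1.trans Finset.sdiff_subset
        have h1 : r.erase x = rg := by
          apply hrguniq
          constructor
          · intro y hy
            rw [Finset.mem_erase] at hy
            have hy2 := Finset.mem_sdiff.1 (hr1 hy.2)
            exact Finset.mem_sdiff.2 ⟨Finset.mem_erase.2 ⟨hy.1, hy2.1⟩, hy2.2⟩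
          · intro u hu
            have hxu : x ∉ u := fun hc => hxA (hu hc)
            refine mem_trF.2 ⟨r ∪ u, hr2 u hu, ?_⟩
            ext y
            simp only [Finset.mem_inter, Finset.mem_union, Finset.mem_erase]
            constructor
            · rintro ⟨hru, hyx, _⟩
              rcases hru with h' | h'
              · exact Or.inl ⟨hyx, h'⟩
              · exact Or.inr h'
            · rintro (⟨hyx, hyr⟩ | hyu)
              · exact ⟨Or.inl hyr, hyx, hrsub hyr⟩
              · refine ⟨Or.inr hyu, ?_, ?_⟩
                · exact fun hc => hxu (hc ▸ hyu)
                · exact (Finset.mem_erase.1 (hAB' (hu hyu))).2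
        have h2 : t.erase x \ A = rg := by
          apply hrguniq
          refine ⟨?_, hAcube⟩
          intro y hy
          rw [Finset.mem_sdiff, Finset.mem_erase] at hy
          exact Finset.mem_sdiff.2 ⟨Finset.mem_erase.2 ⟨hy.1.1, htB hy.1.2⟩, hy.2⟩
        have hre : r.erase x = t.erase x \ A := h1.trans h2.symm
        have htA' : t.erase x ∩ A = t ∩ A := by
          ext y
          simp only [Finset.mem_inter, Finset.mem_erase]
          exact ⟨fun ⟨⟨_, a⟩, b⟩ => ⟨a, b⟩, fun ⟨a, b⟩ => ⟨⟨fun hc => hxA (hc ▸ b), a⟩, b⟩⟩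
        have hneg : x ∉ r → r = t.erase x \ A := fun hxr => by
          rw [← Finset.erase_eq_self.2 hxr, hre]
        have hposr : x ∈ r → r = insert x (t.erase x \ A) := fun hxr => by
          rw [← Finset.insert_erase hxr, hre]
        by_cases hxt : x ∈ t
        · by_cases hxr : x ∈ r
          · have hrt : r = t \ A := by
              rw [hposr hxr]
              ext y
              simp only [Finset.mem_insert, Finset.mem_sdiff, Finset.mem_erase]
              constructor
              · rintro (rfl | ⟨⟨_, hyt⟩, hyA⟩)
                exacts [⟨hxt, hxA⟩, ⟨hyt, hyA⟩]
              · rintro ⟨hyt, hyA⟩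
                by_cases hy : y = x
                · exact Or.inl hy
                · exact Or.inr ⟨⟨hy, hyt⟩, hyA⟩
            exact ⟨A, hABB, hAcard, fun u hu => hrt ▸ hr2 u hu⟩
          · exfalso
            apply hcase
            have htu : r ∪ (t ∩ A) = t.erase x := by
              rw [hneg hxr, ← htA', Finset.sdiff_union_inter]
            have h3 : t.erase x ∈ F := htu ▸ hr2 (t ∩ A) Finset.inter_subset_right
            rw [redF, Finset.mem_filter]
            exact ⟨h3, Finset.notMem_erase x t,
              by rw [Finset.insert_erase hxt]; exact ht⟩
        · by_cases hxr : x ∈ r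
          · exfalso
            apply hcase
            have h3 := hr2 (t ∩ A) Finset.inter_subset_right
            have heq : insert x (t.erase x \ A) ∪ (t ∩ A) = insert x (t.erase x) := by
              rw [Finset.insert_union, ← htA', Finset.sdiff_union_inter]
            rw [hposr hxr, heq] at h3
            rw [redF, Finset.mem_filter]
            refine ⟨?_, Finset.notMem_erase x t, h3⟩
            rw [Finset.erase_eq_self.2 hxt]
            exact ht
          · have hrt : r = t \ A := by
              rw [hneg hxr, Finset.erase_eq_self.2 hxt]
            exact ⟨A, hABB, hAcard, fun u hu => hrt ▸ hr2 u hu⟩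

end WelzlAux

/-- Welzl's lemma: in a `d`-maximum class, every trace on a finite set `B`
with `|B| ≥ d` internally shatters some `d`-element subset of `B`. -/
theorem welzl_internal_shatter (C : Set (Set X)) (d : ℕ) (h : IsMaximum C d) :
    ∀ B : Finset X, d ≤ B.card → ∀ t ∈ Tr C ↑B,
      ∃ A : Finset X, A ⊆ B ∧ A.card = d ∧
        {s ∈ Tr C ↑B | s ∩ (↑B \ ↑A) = t ∩ (↑B \ ↑A)}.ncard = 2 ^ d := by
  classical
  intro B hdB t htB
  set F : Finset (Finset X) := B.powerset.filter (fun f => (↑f : Set X) ∈ Tr C ↑B) with hFdef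
  have hmemF : ∀ f, f ∈ F ↔ f ⊆ B ∧ (↑f : Set X) ∈ Tr C ↑B := by
    intro f; rw [hFdef, Finset.mem_filter, Finset.mem_powerset]
  have hsurj : ∀ s ∈ Tr C ↑B, ∃ f ∈ F, (↑f : Set X) = s := by
    intro s hs
    obtain ⟨c, hc, rfl⟩ := hs
    have hcoe : (↑(B.filter (· ∈ c)) : Set X) = c ∩ ↑B := by
      ext y
      simp only [Finset.coe_filter, Set.mem_setOf_eq, Set.mem_inter_iff, Finset.mem_coe]
      tauto
    exact ⟨B.filter (· ∈ c), (hmemF _).2 ⟨Finset.filter_subset _ _,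
      by rw [hcoe]; exact ⟨c, hc, rfl⟩⟩, hcoe⟩
  have hMax : WelzlAux.MaxOn d B F := by
    refine ⟨fun f hf => ((hmemF f).1 hf).1, ?_⟩
    intro A hAB
    have hset : (fun f : Finset X => (↑f : Set X)) '' ↑(WelzlAux.trF F A) = Tr C ↑A := by
      ext s
      constructor
      · rintro ⟨g, hg, rfl⟩
        rw [Finset.mem_coe, WelzlAux.mem_trF] at hg
        obtain ⟨f, hf, rfl⟩ := hg
        obtain ⟨c, hc, hfc⟩ := ((hmemF f).1 hf).2
        refine ⟨c, hc, ?_⟩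
        show c ∩ ↑A = ↑(f ∩ A)
        rw [Finset.coe_inter, ← hfc]
        ext y
        simp only [Set.mem_inter_iff, Finset.mem_coe]
        exact ⟨fun ⟨a, b⟩ => ⟨⟨a, hAB b⟩, b⟩, fun ⟨⟨a, _⟩, b⟩ => ⟨a, b⟩⟩
      · rintro ⟨c, hc, rfl⟩
        obtain ⟨f, hf, hfc⟩ := hsurj (c ∩ ↑B) ⟨c, hc, rfl⟩
        refine ⟨f ∩ A, ?_, ?_⟩
        · rw [Finset.mem_coe, WelzlAux.mem_trF]; exact ⟨f, hf, rfl⟩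
        · show ↑(f ∩ A) = c ∩ ↑A
          rw [Finset.coe_inter, hfc]
          ext y
          simp only [Set.mem_inter_iff, Finset.mem_coe]
          exact ⟨fun ⟨⟨a, _⟩, b⟩ => ⟨a, b⟩, fun ⟨a, b⟩ => ⟨⟨a, hAB b⟩, b⟩⟩
    have hh := h.2 A
    rw [← hset, Set.ncard_image_of_injective _ Finset.coe_injective,
      Set.ncard_coe_finset] at hh
    exact hh
  obtain ⟨tF, htF, htFc⟩ := hsurj t htB
  obtain ⟨A, hAB, hAcard, hcube⟩ :=
    WelzlAux.welzl_fin B.card B F d le_rfl hMax hdB tF htF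
  refine ⟨A, hAB, hAcard, ?_⟩
  set SF := F.filter (fun f => f ∩ (B \ A) = tF ∩ (B \ A)) with hSF
  have htFB : tF ⊆ B := ((hmemF tF).1 htF).1
  have hseteq : {s ∈ Tr C ↑B | s ∩ (↑B \ ↑A) = t ∩ (↑B \ ↑A)}
      = (fun f : Finset X => (↑f : Set X)) '' ↑SF := by
    ext s
    simp only [Set.mem_setOf_eq, Set.mem_image, Finset.mem_coe, hSF, Finset.mem_filter]
    constructor
    · rintro ⟨hs, hcond⟩
      obtain ⟨f, hf, rfl⟩ := hsurj s hs
      refine ⟨f, ⟨hf, ?_⟩, rfl⟩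
      apply Finset.coe_injective
      simp only [Finset.coe_inter, Finset.coe_sdiff]
      rw [← htFc] at hcond
      exact hcond
    · rintro ⟨f, ⟨hf, hcond⟩, rfl⟩
      refine ⟨((hmemF f).1 hf).2, ?_⟩
      rw [← htFc]
      have h4 := congrArg (fun (u : Finset X) => (↑u : Set X)) hcond
      simpa only [Finset.coe_inter, Finset.coe_sdiff] using h4
  rw [hseteq, Set.ncard_image_of_injective _ Finset.coe_injective, Set.ncard_coe_finset]
  have hSFeq : SF = A.powerset.image (fun u => (tF \ A) ∪ u) := by
    ext g
    simp only [hSF, Finset.mem_filter, Finset.mem_image, Finset.mem_powerset]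
    constructor
    · rintro ⟨hg, hcond⟩
      refine ⟨g ∩ A, Finset.inter_subset_right, ?_⟩
      have hgB : g ⊆ B := ((hmemF g).1 hg).1
      ext y
      simp only [Finset.mem_union, Finset.mem_sdiff, Finset.mem_inter]
      constructor
      · rintro (⟨hyt, hyA⟩ | ⟨hyg, _⟩)
        · have h5 : y ∈ tF ∩ (B \ A) :=
            Finset.mem_inter.2 ⟨hyt, Finset.mem_sdiff.2 ⟨htFB hyt, hyA⟩⟩
          rw [← hcond] at h5
          exact (Finset.mem_inter.1 h5).1
        · exact hyg
      · intro hyg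
        by_cases hyA : y ∈ A
        · exact Or.inr ⟨hyg, hyA⟩
        · have h5 : y ∈ g ∩ (B \ A) :=
            Finset.mem_inter.2 ⟨hyg, Finset.mem_sdiff.2 ⟨hgB hyg, hyA⟩⟩
          rw [hcond] at h5
          exact Or.inl ⟨(Finset.mem_inter.1 h5).1, hyA⟩
    · rintro ⟨u, hu, rfl⟩
      refine ⟨hcube u hu, ?_⟩
      ext y
      simp only [Finset.mem_inter, Finset.mem_union, Finset.mem_sdiff]
      constructor
      · rintro ⟨hy1, hy2⟩
        rcases hy1 with ⟨hyt, _⟩ | hyu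
        · exact ⟨hyt, hy2⟩
        · exact absurd (hu hyu) hy2.2
      · rintro ⟨hyt, hy2⟩
        exact ⟨Or.inl ⟨hyt, hy2.2⟩, hy2⟩
  have key : ∀ w ⊆ A, ((tF \ A) ∪ w) ∩ A = w := by
    intro w hw
    ext y
    simp only [Finset.mem_inter, Finset.mem_union, Finset.mem_sdiff]
    constructor
    · rintro ⟨h1 | h1, h2⟩
      · exact absurd h2 h1.2
      · exact h1
    · intro hyw
      exact ⟨Or.inr hyw, hw hyw⟩
  have hinj : Set.InjOn (fun u => (tF \ A) ∪ u) ↑A.powerset := by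
    intro u hu v hv huv
    rw [Finset.mem_coe, Finset.mem_powerset] at hu hv
    rw [← key u hu, ← key v hv]
    simp only at huv
    rw [huv]
  rw [hSFeq, Finset.card_image_of_injOn hinj, Finset.card_powerset, hAcard]
end

section
/- Every d-maximum family C ⊆ 2^X admits a d-dimensional (labeled) compression scheme: there is a compression function κ assigning to each finite restriction f ∈ C|_fin a subset κ(f) ⊆ dom(f) with |κ(f)| ≤ d, and a finite set R of reconstruction functions ρ : [X]^{≤d} × 2^{≤d} → 2^X, such that every f ∈ C|_fin is recovered: f ⊆ ρ(κ(f), f|_{κ(f)}) for some ρ ∈ R. Concretely, one may take κ(f) to be an internally shattered d-subset of dom(f) and the 2^d reconstruction functions indexed by η : d → 2 as in Welzl's lemma. -/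
/-!
Restricting a finite maximum class of dimension `k + 1` on `B` to `B \ {x}`, and reducing it
at `x` (keeping the `f ∌ x` with both `f` and `f ∪ {x}` present), gives maximum classes of
dimensions `k + 1` and `k`: Sauer–Shelah bounds both sizes, and the two bounds add up to the size
of the class by Pascal's rule for `Φ`. Since restriction and reduction at different points
commute, a maximum class on more than `k + 1` points has no isolated vertex in its one-inclusion
graph, and inducting through the reduction along an edge `f — f ∆ {x}` yields Welzl's lemma: every
concept `f` internally shatters a `d`-subset `A` of the sample (or the whole sample if it is
smaller). Compressing `f` to `A` loses nothing: a point `x ∉ A` lies in `f` iff the full cube over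
`A` with `x` set occurs in the trace on `A ∪ {x}`, since together with the cube with `x` unset it
would shatter the `d + 1` points `A ∪ {x}`. One reconstruction function thus serves every sample.
-/

open Set

variable {X : Type*}

namespace MaximumClass

open scoped Finset symmDiff

lemma Phi_succ_succ (k m : ℕ) : Phi (k + 1) (m + 1) = Phi (k + 1) m + Phi k m := by
  simp only [Phi, Finset.sum_range_succ' _ (k + 1), Nat.choose_succ_succ, Nat.choose_zero_right,
    Finset.sum_add_distrib]
  ring

lemma Phi_eq_two_pow {k m : ℕ} (h : m ≤ k) : Phi k m = 2 ^ m := by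
  rw [Phi, ← Nat.sum_range_choose m]
  refine (Finset.sum_subset (Finset.range_subset_range.2 (by omega)) fun i _ hi => ?_).symm
  exact Nat.choose_eq_zero_of_lt (by simpa using hi)

lemma Phi_card_eq_card_filter_powerset (B : Finset X) (k : ℕ) :
    Phi k #B = #{S ∈ B.powerset | #S ≤ k} := by
  rw [Finset.card_eq_sum_card_fiberwise (f := Finset.card) (t := Finset.range (k + 1))
    (fun S hS => by simpa [Nat.lt_succ_iff] using (Finset.mem_filter.1 hS).2), Phi]
  refine Finset.sum_congr rfl fun i hi => ?_
  rw [← Finset.card_powersetCard, Finset.powersetCard_eq_filter, Finset.filter_filter]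
  congr 1
  refine Finset.filter_congr fun S _ => ?_
  simp only [Finset.mem_range] at hi
  exact ⟨fun h => ⟨by omega, h⟩, And.right⟩

section Families

variable [DecidableEq X] {D : Finset (Finset X)} {B A f g S : Finset X} {a x y : X} {k : ℕ}

lemma vcDim_le_iff : D.vcDim ≤ k ↔ ∀ S, D.Shatters S → #S ≤ k := by
  simp [Finset.vcDim, Finset.sup_le_iff]

lemma card_le_Phi (hsub : ∀ f ∈ D, f ⊆ B) (hvc : D.vcDim ≤ k) : #D ≤ Phi k #B := by
  rw [Phi_card_eq_card_filter_powerset]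
  refine D.card_le_card_shatterer.trans (Finset.card_le_card fun S hS => ?_)
  rw [Finset.mem_shatterer] at hS
  obtain ⟨u, hu, hSu⟩ := hS.exists_superset
  exact Finset.mem_filter.2
    ⟨Finset.mem_powerset.2 (hSu.trans (hsub u hu)), hS.card_le_vcDim.trans hvc⟩

structure IsMaximumOn (D : Finset (Finset X)) (B : Finset X) (k : ℕ) : Prop where
  subset : ∀ f ∈ D, f ⊆ B
  vcDim_le : D.vcDim ≤ k
  card_eq : #D = Phi k #B

lemma IsMaximumOn.eq_powerset (h : IsMaximumOn D B k) (hB : #B ≤ k) : D = B.powerset :=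
  Finset.eq_of_subset_of_card_le (fun f hf => Finset.mem_powerset.2 (h.subset f hf))
    (by rw [Finset.card_powerset, h.card_eq, Phi_eq_two_pow hB])

lemma symmDiff_singleton_eq_insert (hx : x ∉ g) : g ∆ {x} = insert x g := by
  ext a; simp only [Finset.mem_symmDiff, Finset.mem_singleton, Finset.mem_insert]; grind

lemma symmDiff_singleton_eq_erase (hx : x ∈ g) : g ∆ {x} = g.erase x := by
  ext a; simp only [Finset.mem_symmDiff, Finset.mem_singleton, Finset.mem_erase]; grind

variable (a) in
def restriction (D : Finset (Finset X)) : Finset (Finset X) := D.image (·.erase a)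

variable (a) in
def reduction (D : Finset (Finset X)) : Finset (Finset X) :=
  D.memberSubfamily a ∩ D.nonMemberSubfamily a

lemma mem_restriction : g ∈ restriction a D ↔ ∃ f ∈ D, f.erase a = g := Finset.mem_image

lemma mem_reduction : g ∈ reduction a D ↔ g ∈ D ∧ insert a g ∈ D ∧ a ∉ g := by
  simp only [reduction, Finset.mem_inter, Finset.mem_memberSubfamily,
    Finset.mem_nonMemberSubfamily]
  tauto

lemma reduction_subset_restriction : reduction a D ⊆ restriction a D := fun g hg => by
  obtain ⟨hg, -, ha⟩ := mem_reduction.1 hg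
  exact mem_restriction.2 ⟨g, hg, Finset.erase_eq_of_notMem ha⟩

lemma erase_mem_reduction (hf : f ∈ D) (hf' : f ∆ {a} ∈ D) : f.erase a ∈ reduction a D := by
  by_cases ha : a ∈ f
  · rw [symmDiff_singleton_eq_erase ha] at hf'
    exact mem_reduction.2 ⟨hf', by rwa [Finset.insert_erase ha], Finset.notMem_erase a f⟩
  · rw [symmDiff_singleton_eq_insert ha] at hf'
    rw [Finset.erase_eq_of_notMem ha]
    exact mem_reduction.2 ⟨hf, hf', ha⟩

lemma card_restriction_add_card_reduction (a : X) (D : Finset (Finset X)) :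
    #(restriction a D) + #(reduction a D) = #D := by
  rw [restriction, ← Finset.memberSubfamily_union_nonMemberSubfamily, reduction,
    Finset.card_union_add_card_inter, Finset.card_memberSubfamily_add_card_nonMemberSubfamily]

lemma vcDim_restriction_le_vcDim : (restriction a D).vcDim ≤ D.vcDim :=
  (Finset.vcDim_mono (Finset.image_subset_iff.2 fun _ => Down.erase_mem_compression)).trans
    (Finset.vcDim_compress_le a D)

lemma subset_insert_induction {p : Finset X → Prop} (h₀ : ∀ s ⊆ A, p s)
    (h₁ : ∀ s ⊆ A, p (insert a s)) : ∀ t ⊆ insert a A, p t := by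
  intro t ht
  rw [Finset.subset_insert_iff] at ht
  by_cases ha : a ∈ t
  · simpa [Finset.insert_erase ha] using h₁ _ ht
  · simpa [Finset.erase_eq_of_notMem ha] using h₀ _ ht

lemma shatters_insert_of_shatters_reduction (hS : (reduction a D).Shatters S) :
    a ∉ S ∧ D.Shatters (insert a S) := by
  have ha : a ∉ S := fun ha => by
    obtain ⟨u, hu, hSu⟩ := hS.exists_superset
    exact (mem_reduction.1 hu).2.2 (hSu ha)
  refine ⟨ha, subset_insert_induction (fun s hs => ?_) (fun s hs => ?_)⟩ <;>
    obtain ⟨u, hu, rfl⟩ := hS hs <;> obtain ⟨hu, hau, hu'⟩ := mem_reduction.1 hu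
  · exact ⟨u, hu, by rw [Finset.insert_inter_of_notMem hu']⟩
  · exact ⟨insert a u, hau, by rw [Finset.insert_inter_distrib]⟩

lemma vcDim_reduction_le (h : D.vcDim ≤ k + 1) : (reduction a D).vcDim ≤ k := by
  refine vcDim_le_iff.2 fun S hS => ?_
  obtain ⟨ha, hS'⟩ := shatters_insert_of_shatters_reduction hS
  have := hS'.card_le_vcDim.trans h
  rw [Finset.card_insert_of_notMem ha] at this
  omega

lemma restriction_subset (hD : ∀ f ∈ D, f ⊆ B) : ∀ g ∈ restriction a D, g ⊆ B.erase a := by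
  simp only [mem_restriction]
  rintro _ ⟨f, hf, rfl⟩
  exact Finset.erase_subset_erase a (hD f hf)

lemma IsMaximumOn.restriction_and_reduction (h : IsMaximumOn D B (k + 1)) (ha : a ∈ B) :
    IsMaximumOn (restriction a D) (B.erase a) (k + 1) ∧
      IsMaximumOn (reduction a D) (B.erase a) k := by
  have hres := restriction_subset (a := a) h.subset
  have hred g hg := hres g (reduction_subset_restriction hg)
  have hvres := (vcDim_restriction_le_vcDim (a := a)).trans h.vcDim_le
  have hvred := vcDim_reduction_le h.vcDim_le (a := a)
  have hle₁ := card_le_Phi hres hvres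
  have hle₂ := card_le_Phi hred hvred
  have hsum := card_restriction_add_card_reduction a D
  have hD := h.card_eq
  have hPhi : Phi (k + 1) #B = Phi (k + 1) #(B.erase a) + Phi k #(B.erase a) := by
    rw [← Finset.card_erase_add_one ha, Phi_succ_succ]
  exact ⟨⟨hres, hvres, by omega⟩, ⟨hred, hvred, by omega⟩⟩

lemma IsMaximumOn.restrict (h : IsMaximumOn D B k) (ha : a ∈ B) :
    IsMaximumOn (restriction a D) (B.erase a) k := by
  cases k with
  | succ k => exact (h.restriction_and_reduction ha).1
  | zero =>
    have hres := restriction_subset (a := a) h.subset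
    have hvres := (vcDim_restriction_le_vcDim (a := a)).trans h.vcDim_le
    have hPhi (n : ℕ) : Phi 0 n = 1 := by simp [Phi]
    have hD := h.card_eq
    have hle := card_le_Phi hres hvres
    rw [hPhi] at hD hle
    have hpos : 0 < #(restriction a D) :=
      Finset.card_pos.2 ((Finset.card_pos.1 (by omega)).image _)
    exact ⟨hres, hvres, by rw [hPhi]; omega⟩

lemma IsMaximumOn.reduce (h : IsMaximumOn D B (k + 1)) (ha : a ∈ B) :
    IsMaximumOn (reduction a D) (B.erase a) k :=
  (h.restriction_and_reduction ha).2

lemma restriction_reduction_subset (hxy : x ≠ y) :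
    restriction y (reduction x D) ⊆ reduction x (restriction y D) := by
  intro g hg
  obtain ⟨f, hf, rfl⟩ := mem_restriction.1 hg
  obtain ⟨hfD, hfx, hxf⟩ := mem_reduction.1 hf
  refine mem_reduction.2 ⟨mem_restriction.2 ⟨f, hfD, rfl⟩,
    mem_restriction.2 ⟨insert x f, hfx, Finset.erase_insert_of_ne hxy⟩,
    fun h => hxf (Finset.mem_of_mem_erase h)⟩

lemma restriction_reduction_comm (h : IsMaximumOn D B (k + 1)) (hx : x ∈ B)
    (hy : y ∈ B) (hxy : x ≠ y) :
    restriction y (reduction x D) = reduction x (restriction y D) := by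
  refine Finset.eq_of_subset_of_card_le (restriction_reduction_subset hxy) ?_
  rw [((h.reduce hx).restrict (Finset.mem_erase.2 ⟨hxy.symm, hy⟩)).card_eq,
    ((h.restrict hy).reduce (Finset.mem_erase.2 ⟨hxy, hx⟩)).card_eq, Finset.erase_right_comm]

lemma eq_or_eq_symmDiff_of_erase_eq (h : g.erase x = f.erase x) : g = f ∨ g = f ∆ {x} := by
  by_cases hx : x ∈ g ↔ x ∈ f
  · left; ext a; have := Finset.ext_iff.1 h a; simp only [Finset.mem_erase] at this; grind
  · right; ext a; have := Finset.ext_iff.1 h a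
    simp only [Finset.mem_erase, Finset.mem_symmDiff, Finset.mem_singleton] at this ⊢; grind

lemma erase_symmDiff_singleton (hxy : x ≠ y) : (f ∆ {y}).erase x = f.erase x ∆ {y} := by
  ext a; simp only [Finset.mem_erase, Finset.mem_symmDiff, Finset.mem_singleton]; grind

lemma IsMaximumOn.symmDiff_mem_of_antipodal (h : IsMaximumOn D B (k + 1)) (hx : x ∈ B)
    (hy : y ∈ B) (hxy : x ≠ y) (hf : f ∈ D) (hf' : f ∆ {x} ∆ {y} ∈ D) :
    f ∆ {x} ∈ D ∨ f ∆ {y} ∈ D := by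
  have h₁ : f.erase y ∈ restriction y D := mem_restriction.2 ⟨f, hf, rfl⟩
  have h₂ : f.erase y ∆ {x} ∈ restriction y D := mem_restriction.2
    ⟨_, hf', by ext; simp only [Finset.mem_erase, Finset.mem_symmDiff, Finset.mem_singleton]; grind⟩
  have h₃ := erase_mem_reduction h₁ h₂
  rw [← restriction_reduction_comm h hx hy hxy] at h₃
  obtain ⟨g, hg, hgf⟩ := mem_restriction.1 h₃
  obtain ⟨hgD, hxgD, hxg⟩ := mem_reduction.1 hg
  have hedge : ∀ v, v.erase x = g.erase x → v ∈ D := fun v hv => by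
    rcases eq_or_eq_symmDiff_of_erase_eq hv with rfl | rfl
    · exact hgD
    · rwa [symmDiff_singleton_eq_insert hxg]
  -- The edge `{g, insert x g}` contains the neighbour of `f` that agrees with `g` at `y`.
  by_cases hyg : y ∈ g ↔ y ∈ f
  · refine Or.inl (hedge _ (Finset.ext fun a => ?_))
    have := Finset.ext_iff.1 hgf a
    simp only [Finset.mem_erase, Finset.mem_symmDiff, Finset.mem_singleton] at this ⊢; grind
  · refine Or.inr (hedge _ (Finset.ext fun a => ?_))
    have := Finset.ext_iff.1 hgf a
    simp only [Finset.mem_erase, Finset.mem_symmDiff, Finset.mem_singleton] at this ⊢; grind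

lemma IsMaximumOn.exists_symmDiff_singleton_mem (h : IsMaximumOn D B (k + 1)) (hB : B.Nonempty)
    (hf : f ∈ D) : ∃ x ∈ B, f ∆ {x} ∈ D := by
  induction B using Finset.strongInduction generalizing D f with
  | H B ih =>
  obtain ⟨x, hx⟩ := hB
  by_cases hsmall : #B ≤ k + 1
  · refine ⟨x, hx, ?_⟩
    rw [h.eq_powerset hsmall, Finset.mem_powerset] at hf ⊢
    exact Finset.symmDiff_subset_union.trans
      (Finset.union_subset hf (Finset.singleton_subset_iff.2 hx))
  · have hB' : (B.erase x).Nonempty :=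
      Finset.card_pos.1 (by rw [Finset.card_erase_of_mem hx]; omega)
    obtain ⟨y, hy, hfy⟩ := ih _ (Finset.erase_ssubset hx) (h.restrict hx) hB'
      (mem_restriction.2 ⟨f, hf, rfl⟩)
    obtain ⟨hyx, hyB⟩ := Finset.mem_erase.1 hy
    obtain ⟨c, hc, hcf⟩ := mem_restriction.1 hfy
    rw [← erase_symmDiff_singleton hyx.symm] at hcf
    rcases eq_or_eq_symmDiff_of_erase_eq hcf with rfl | rfl
    · exact ⟨y, hyB, hc⟩
    · rcases h.symmDiff_mem_of_antipodal hyB hx hyx hf hc with hy | hx'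
      · exact ⟨y, hyB, hy⟩
      · exact ⟨x, hx, hx'⟩

variable (D) in
def InternallyShatters (f A : Finset X) : Prop := ∀ s ⊆ A, f \ A ∪ s ∈ D

lemma internallyShatters_empty (hf : f ∈ D) : InternallyShatters D f ∅ := fun s hs => by
  simpa [Finset.subset_empty.1 hs] using hf

lemma internallyShatters_of_eq_powerset (hD : D = B.powerset) (hf : f ∈ D) (hA : A ⊆ B) :
    InternallyShatters D f A := fun s hs => by
  rw [hD, Finset.mem_powerset] at hf ⊢
  exact Finset.union_subset (Finset.sdiff_subset.trans hf) (hs.trans hA)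

lemma InternallyShatters.insert_of_reduction
    (h : InternallyShatters (reduction x D) (f.erase x) A) :
    InternallyShatters D f (insert x A) := by
  refine subset_insert_induction (fun s hs => ?_) (fun s hs => ?_) <;>
    obtain ⟨hD, hxD, hx⟩ := mem_reduction.1 (h s hs)
  · convert hD using 1; ext; simp only [Finset.mem_union, Finset.mem_sdiff, Finset.mem_insert,
      Finset.mem_erase] at hx ⊢; grind
  · convert hxD using 1; ext; simp only [Finset.mem_union, Finset.mem_sdiff, Finset.mem_insert,
      Finset.mem_erase] at hx ⊢; grind

/-- Welzl's lemma. -/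
lemma IsMaximumOn.exists_internallyShatters (h : IsMaximumOn D B k) (hf : f ∈ D) :
    ∃ A ⊆ B, #A = min k #B ∧ InternallyShatters D f A := by
  induction k generalizing D B f with
  | zero => exact ⟨∅, Finset.empty_subset _, by simp, internallyShatters_empty hf⟩
  | succ k ih =>
  by_cases hsmall : #B ≤ k + 1
  · exact ⟨B, subset_rfl, (min_eq_right hsmall).symm,
      internallyShatters_of_eq_powerset (h.eq_powerset hsmall) hf subset_rfl⟩
  obtain ⟨x, hx, hfx⟩ :=
    h.exists_symmDiff_singleton_mem (Finset.card_pos.1 (by omega)) hf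
  obtain ⟨A, hAB, hA, hfA⟩ := ih (h.reduce hx) (erase_mem_reduction hf hfx)
  have hxA : x ∉ A := fun hxA => Finset.notMem_erase x B (hAB hxA)
  refine ⟨insert x A, Finset.insert_subset hx (hAB.trans (Finset.erase_subset x B)), ?_,
    hfA.insert_of_reduction⟩
  rw [Finset.card_insert_of_notMem hxA, hA, Finset.card_erase_of_mem hx]
  omega

end Families

section Compression

variable {C : Set (Set X)} {d : ℕ} {A B S T f : Finset X} {t : Set X} {a : X}

open Classical in
variable (C) in
noncomputable def traceOn (B : Finset X) : Finset (Finset X) :=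
  {S ∈ B.powerset | (S : Set X) ∈ Tr C B}

lemma mem_traceOn : S ∈ traceOn C B ↔ S ⊆ B ∧ (S : Set X) ∈ Tr C B := by
  simp [traceOn]

lemma coe_filter_mem (ht : t ⊆ B) [DecidablePred (· ∈ t)] : (B.filter (· ∈ t) : Set X) = t := by
  ext x
  simp only [Finset.coe_filter]
  exact ⟨And.right, fun hx => ⟨ht hx, hx⟩⟩

lemma filter_mem_mem_traceOn (ht : t ∈ Tr C B) [DecidablePred (· ∈ t)] :
    B.filter (· ∈ t) ∈ traceOn C B := by
  obtain ⟨c, hc, rfl⟩ := ht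
  refine mem_traceOn.2 ⟨Finset.filter_subset _ _, ?_⟩
  rw [coe_filter_mem Set.inter_subset_right]
  exact ⟨c, hc, rfl⟩

lemma card_traceOn (h : IsMaximum C d) (B : Finset X) : #(traceOn C B) = Phi d #B := by
  classical
  have himage : Tr C B = (↑) '' (traceOn C B : Set (Finset X)) := by
    ext u
    refine ⟨fun hu => ?_, fun ⟨S, hS, hSu⟩ => hSu ▸ (mem_traceOn.1 hS).2⟩
    have huB : u ⊆ B := by obtain ⟨c, -, rfl⟩ := hu; exact Set.inter_subset_right
    exact ⟨_, filter_mem_mem_traceOn hu, coe_filter_mem huB⟩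
  rw [← h.2 B, himage, Set.ncard_image_of_injective _ Finset.coe_injective, Set.ncard_coe_finset]

variable [DecidableEq X]

lemma inter_mem_traceOn (hS : S ∈ traceOn C B) (hT : T ⊆ B) : S ∩ T ∈ traceOn C T := by
  obtain ⟨-, c, hc, hcS⟩ := mem_traceOn.1 hS
  refine mem_traceOn.2 ⟨Finset.inter_subset_right, c, hc, ?_⟩
  rw [Finset.coe_inter, ← hcS, Set.inter_assoc, Set.inter_eq_right.2 (Finset.coe_subset.2 hT)]

lemma shat_of_shatters_traceOn (hS : (traceOn C B).Shatters S) : Shat C S := by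
  classical
  intro t ht
  have hSB : S ⊆ B := by
    obtain ⟨v, hv, hSv⟩ := hS.exists_superset
    exact hSv.trans (mem_traceOn.1 hv).1
  obtain ⟨u, hu, hSu⟩ := hS (Finset.filter_subset (· ∈ t) S)
  obtain ⟨-, c, hc, hcS⟩ := mem_traceOn.1 (inter_mem_traceOn hu hSB)
  refine ⟨c, hc, ?_⟩
  change c ∩ S = _ at hcS
  rw [hcS, Finset.inter_comm, hSu, coe_filter_mem ht]

lemma vcDim_traceOn_le (hC : VCLe C d) : (traceOn C B).vcDim ≤ d :=
  vcDim_le_iff.2 fun _ hS => hC _ (shat_of_shatters_traceOn hS)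

lemma isMaximumOn_traceOn (h : IsMaximum C d) (B : Finset X) :
    IsMaximumOn (traceOn C B) B d :=
  ⟨fun _ hS => (mem_traceOn.1 hS).1, vcDim_traceOn_le h.1.1, card_traceOn h B⟩

lemma card_le_of_forall_subset_mem_traceOn (hC : VCLe C d) (h : ∀ T ⊆ A, T ∈ traceOn C A) :
    #A ≤ d :=
  (Finset.shatters_of_forall_subset h).card_le_vcDim.trans (vcDim_traceOn_le hC)

variable (C) in
def reconstruct (p : Finset X × Set X) : Set X :=
  p.2 ∪ {x | x ∉ p.1 ∧ ∀ s ⊆ p.1, insert x s ∈ traceOn C (insert x p.1)}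

lemma forall_insert_mem_traceOn_iff (h : IsMaximum C d) (hAB : A ⊆ B) (hA : #A = min d #B)
    (hfA : InternallyShatters (traceOn C B) f A) (ha : a ∈ B) (haA : a ∉ A) :
    (∀ s ⊆ A, insert a s ∈ traceOn C (insert a A)) ↔ a ∈ f := by
  have hcube s (hs : s ⊆ A) := inter_mem_traceOn (hfA s hs) (Finset.insert_subset ha hAB)
  by_cases haf : a ∈ f
  · refine iff_of_true (fun s hs => ?_) haf
    convert hcube s hs using 1
    ext x; have := @hs x; simp only [Finset.mem_insert, Finset.mem_inter, Finset.mem_union,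
      Finset.mem_sdiff] at this ⊢; grind
  · refine iff_of_false (fun hins => ?_) haf
    have hzero : ∀ s ⊆ A, s ∈ traceOn C (insert a A) := fun s hs => by
      convert hcube s hs using 1
      ext x; have := @hs x; simp only [Finset.mem_insert, Finset.mem_inter, Finset.mem_union,
        Finset.mem_sdiff] at this ⊢; grind
    -- Both cubes together shatter `insert a A`, so `#A < d`, hence `A = B`, contradicting `a ∉ A`.
    have hcard := card_le_of_forall_subset_mem_traceOn h.1.1 (subset_insert_induction hzero hins)
    rw [Finset.card_insert_of_notMem haA] at hcard
    exact haA (Finset.eq_of_subset_of_card_le hAB (by omega) ▸ ha)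

lemma exists_compression (h : IsMaximum C d) (ht : t ∈ Tr C B) :
    ∃ A ⊆ B, #A ≤ d ∧ reconstruct C (A, t ∩ A) ∩ B = t := by
  classical
  have htB : t ⊆ B := by obtain ⟨c, -, rfl⟩ := ht; exact Set.inter_subset_right
  obtain ⟨A, hAB, hA, hfA⟩ :=
    (isMaximumOn_traceOn h B).exists_internallyShatters (filter_mem_mem_traceOn ht)
  refine ⟨A, hAB, hA.trans_le (min_le_left _ _), Set.ext fun a => ?_⟩
  by_cases haB : a ∈ B
  · by_cases haA : a ∈ A
    · simp [reconstruct, haA, haB]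
    · simp [reconstruct, haA, haB, forall_insert_mem_traceOn_iff h hAB hA hfA haB haA]
  · simp only [reconstruct, Set.mem_inter_iff, Finset.mem_coe, haB, and_false, false_iff]
    exact fun hat => haB (htB hat)

end Compression

end MaximumClass

/-- Every `d`-maximum class admits a `d`-dimensional labeled compression scheme. -/
theorem maximum_compression_scheme (C : Set (Set X)) (d : ℕ) (h : IsMaximum C d) :
    ∃ κ : Finset X → Set X → Finset X, ∃ R : Set (Finset X × Set X → Set X),
      R.Finite ∧
      ∀ B : Finset X, ∀ t ∈ Tr C ↑B,
        κ B t ⊆ B ∧ (κ B t).card ≤ d ∧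
        ∃ ρ ∈ R, ρ (κ B t, t ∩ ↑(κ B t)) ∩ ↑B = t := by
  classical
  choose! κ hκ using fun (B : Finset X) t (ht : t ∈ Tr C ↑B) => MaximumClass.exists_compression h ht
  refine ⟨κ, {MaximumClass.reconstruct C}, Set.finite_singleton _, fun B t ht => ?_⟩
  obtain ⟨hκB, hκd, hρ⟩ := hκ B t ht
  exact ⟨hκB, hκd, _, rfl, hρ⟩
end
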